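/- arXiv:0903.3673 — 4 statements merged into one kernel-verified Lean document; each statement's English description precedes it below -/
import Mathlib

section
/- For any discrete abelian group G (possibly with torsion), the asymmetrization of every n-cocycle c ∈ Z^n(G,T) is an asymmetric multicharacter of G. -/
/-- Asymmetrization of an `n`-cochain with values in `T = ℝ/ℤ`:
`(AS c)(g₁,...,gₙ) = Σ_{σ ∈ Sym(n)} sign(σ) • c(g_{σ(1)},...,g_{σ(n)})`
(written additively in `T`). -/
noncomputable def asymmetrization {Q : Type*} [AddCommGroup Q] (n : ℕ)
    (c : (Fin n → Q) → AddCircle (1 : ℝ)) : (Fin n → Q) → AddCircle (1 : ℝ) :=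
  fun g => ∑ σ : Equiv.Perm (Fin n), (Equiv.Perm.sign σ : ℤ) • c (g ∘ σ)

/-- The inhomogeneous coboundary `∂ : C^n(Q,T) → C^{n+1}(Q,T)` (trivial action,
`Q` written additively, `T = ℝ/ℤ`). -/
noncomputable def coboundary {Q : Type*} [AddCommGroup Q] (n : ℕ)
    (ξ : (Fin n → Q) → AddCircle (1 : ℝ)) : (Fin (n + 1) → Q) → AddCircle (1 : ℝ) :=
  fun g =>
    ξ (fun i => g i.succ)
      + ∑ k : Fin n, ((-1 : ℤ) ^ ((k : ℕ) + 1)) •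
          ξ (fun i =>
            if (i : ℕ) < (k : ℕ) then g i.castSucc
            else if (i : ℕ) = (k : ℕ) then g i.castSucc + g i.succ
            else g i.succ)
      + ((-1 : ℤ) ^ (n + 1)) • ξ (fun i => g i.castSucc)

/-!
Let `c` be an `(m+1)`-cochain and `f = (x, y, g₁, …, gₘ)`. Sum `sign σ • (∂c)(f ∘ σ)` over the
permutations `σ` that put `x` before `y`. Rotating the last entry to the front turns the last
outer face into the first one, summed over the permutations that put `x` before `y` after the
rotation; the two sums differ only where `x` or `y` comes first, which gives
`AS c (y, g) + AS c (x, g)`. The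
`k`-th inner face is invariant under exchanging positions `k, k+1`, so it cancels in pairs
`σ, σ * swap k (k+1)` except when `x, y` sit exactly at `k, k+1`; those terms give
`-AS c (x + y, g)`. For a cocycle the whole sum vanishes, which is additivity in the first
variable; the other variables are moved to the front by alternation.
-/

open Equiv Equiv.Perm Finset

theorem swap_castSucc_succ_lt_swap {n : ℕ} (k : Fin n) {p q : Fin (n + 1)} (hpq : p < q)
    (h : ¬(p = k.castSucc ∧ q = k.succ)) :
    swap k.castSucc k.succ p < swap k.castSucc k.succ q := by
  simp only [swap_apply_def]
  split_ifs <;> simp only [Fin.lt_def, Fin.ext_iff, Fin.val_castSucc, Fin.val_succ] at * <;> omega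

theorem finRotate_symm_lt_finRotate_symm_iff {n : ℕ} {p q : Fin (n + 1)} (hpq : p ≠ q) :
    (finRotate (n + 1)).symm p < (finRotate (n + 1)).symm q ↔ q = 0 ∨ (p ≠ 0 ∧ p < q) := by
  have hval : ∀ r : Fin (n + 1),
      ((finRotate (n + 1)).symm r : ℕ) = if r = 0 then n else (r : ℕ) - 1 := by
    intro r
    split_ifs with hr
    · rw [hr, (finRotate (n + 1)).symm_apply_eq.mpr (finRotate_last (n := n)).symm, Fin.val_last]
    · exact coe_finRotate_symm_of_ne_zero hr
  rw [Fin.lt_def, hval, hval]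
  simp only [ne_eq, Fin.ext_iff, Fin.lt_def, Fin.val_zero] at hpq ⊢
  have := p.isLt
  have := q.isLt
  split_ifs <;> omega

theorem sum_perm_apply_zero_eq {M : Type*} [AddCommMonoid M] {n : ℕ}
    (Φ : Perm (Fin (n + 1)) → M) (v : Fin (n + 1)) :
    ∑ σ with σ 0 = v, Φ σ = ∑ τ : Perm (Fin n), Φ (decomposeFin.symm (v, τ)) := by
  rw [sum_filter, ← Fintype.sum_equiv decomposeFin.symm _ _ fun _ => rfl, Fintype.sum_prod_type]
  simp only [decomposeFin_symm_apply_zero, sum_ite_irrel, sum_const_zero, sum_ite_eq', mem_univ,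
    if_true]

theorem sum_inv_lt_eq_sum_adjacent {M : Type*} [AddCommGroup M] {n : ℕ} (k : Fin n)
    (a b : Fin (n + 1)) (F : Perm (Fin (n + 1)) → M)
    (hF : ∀ σ, F (σ * swap k.castSucc k.succ) = -F σ) :
    ∑ σ with σ⁻¹ a < σ⁻¹ b, F σ = ∑ σ with σ k.castSucc = a ∧ σ k.succ = b, F σ := by
  set s := swap k.castSucc k.succ
  have hadj : ∀ σ : Perm (Fin (n + 1)),
      σ k.castSucc = a ∧ σ k.succ = b ↔ σ⁻¹ a = k.castSucc ∧ σ⁻¹ b = k.succ :=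
    fun σ => by rw [inv_eq_iff_eq, inv_eq_iff_eq, eq_comm, @eq_comm _ b]
  rw [← sum_filter_add_sum_filter_not _ fun σ => σ k.castSucc = a ∧ σ k.succ = b, filter_filter]
  have hcross :
      ∑ σ ∈ {σ | σ⁻¹ a < σ⁻¹ b} with ¬(σ k.castSucc = a ∧ σ k.succ = b), F σ = 0 := by
    refine sum_involution (fun σ _ => σ * s) (fun σ _ => by rw [hF, add_neg_cancel])
      (fun σ _ _ => ?_) (fun σ hσ => ?_) (fun σ _ => by simp [s, mul_assoc])
    · exact mul_ne_left.mpr (mt swap_eq_one_iff.mp (Fin.castSucc_lt_succ).ne)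
    · simp only [mem_filter, mem_univ, true_and, hadj] at hσ ⊢
      have hinv : ∀ x, (σ * s)⁻¹ x = s (σ⁻¹ x) := fun x => by
        simp [s, mul_inv_rev, swap_inv]
      refine ⟨?_, ?_⟩
      · rw [hinv, hinv]; exact swap_castSucc_succ_lt_swap k hσ.1 hσ.2
      · rw [hinv, hinv, swap_apply_eq_iff, swap_apply_eq_iff, swap_apply_left, swap_apply_right]
        rintro ⟨ha, hb⟩
        exact (Fin.castSucc_lt_succ (i := k)).not_gt (ha ▸ hb ▸ hσ.1)
  rw [hcross, add_zero]
  congr 1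
  ext σ
  simp only [mem_filter, mem_univ, true_and, and_iff_right_iff_imp, hadj]
  rintro ⟨ha, hb⟩
  rw [ha, hb]
  exact Fin.castSucc_lt_succ

theorem sum_inv_lt_sub_sum_finRotate {M : Type*} [AddCommGroup M] {n : ℕ}
    (D : Perm (Fin (n + 2)) → M) :
    ∑ σ with σ⁻¹ 0 < σ⁻¹ 1, D σ -
        ∑ σ with (finRotate (n + 2)).symm (σ⁻¹ 0) < (finRotate (n + 2)).symm (σ⁻¹ 1), D σ =
      ∑ σ with σ 0 = 0, D σ - ∑ σ with σ 0 = 1, D σ := by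
  simp only [sum_filter, ← sum_sub_distrib]
  refine sum_congr rfl fun σ _ => ?_
  have hne : σ⁻¹ 0 ≠ σ⁻¹ 1 := σ⁻¹.injective.ne zero_ne_one
  have h0 : σ 0 = 0 ↔ σ⁻¹ 0 = 0 := by rw [inv_eq_iff_eq, eq_comm]
  have h1 : σ 0 = 1 ↔ σ⁻¹ 1 = 0 := by rw [inv_eq_iff_eq, eq_comm]
  simp only [finRotate_symm_lt_finRotate_symm_iff hne, h0, h1]
  generalize σ⁻¹ 0 = p, σ⁻¹ 1 = q at hne ⊢
  rcases eq_or_ne q 0 with rfl | hq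
  · simp [hne]
  rcases eq_or_ne p 0 with rfl | hp
  · simp [hq, Fin.pos_iff_ne_zero.mpr hq]
  · simp [hp, hq]

section Cochains

variable {G : Type*} [AddCommGroup G]

def mergeAdjacent {n : ℕ} (k : Fin n) (g : Fin (n + 1) → G) : Fin n → G :=
  fun i => if (i : ℕ) < (k : ℕ) then g i.castSucc
    else if (i : ℕ) = (k : ℕ) then g i.castSucc + g i.succ else g i.succ

theorem coboundary_apply (n : ℕ) (ξ : (Fin n → G) → AddCircle (1 : ℝ)) (g : Fin (n + 1) → G) :
    coboundary n ξ g = ξ (g ∘ Fin.succ) + ∑ k : Fin n, (-1 : ℤ) ^ ((k : ℕ) + 1) •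
      ξ (mergeAdjacent k g) + (-1 : ℤ) ^ (n + 1) • ξ (g ∘ Fin.castSucc) := rfl

theorem mergeAdjacent_comp_swap {n : ℕ} (k : Fin n) (g : Fin (n + 1) → G) :
    mergeAdjacent k (g ∘ swap k.castSucc k.succ) = mergeAdjacent k g := by
  funext i
  simp only [mergeAdjacent, Function.comp_apply]
  split_ifs with hlt heq
  · rw [swap_apply_of_ne_of_ne] <;> simp [Fin.ext_iff] <;> omega
  · rw [Fin.ext heq, swap_apply_left, swap_apply_right, add_comm]
  · rw [swap_apply_of_ne_of_ne] <;> simp [Fin.ext_iff] <;> omega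

theorem mergeAdjacent_comp_cycleRange {n : ℕ} (k : Fin n) (g : Fin (n + 1) → G) :
    mergeAdjacent k (g ∘ Fin.cycleRange k.castSucc) =
      Function.update (g ∘ Fin.succ) k (g 0 + g k.succ) := by
  funext i
  rcases lt_trichotomy i k with hlt | rfl | hgt
  · rw [Function.update_of_ne hlt.ne, mergeAdjacent, if_pos (Fin.lt_def.mp hlt),
      Function.comp_apply, Fin.cycleRange_of_lt (Fin.castSucc_lt_castSucc_iff.mpr hlt),
      Fin.coeSucc_eq_succ]; rfl
  · rw [Function.update_self, mergeAdjacent, if_neg (lt_irrefl _), if_pos rfl]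
    simp only [Function.comp_apply, Fin.cycleRange_self,
      Fin.cycleRange_of_gt Fin.castSucc_lt_succ]
  · have hgt' : k.castSucc < i.succ :=
      Fin.castSucc_lt_succ.trans (Fin.succ_lt_succ_iff.mpr hgt)
    rw [Function.update_of_ne hgt.ne', mergeAdjacent, if_neg (Fin.lt_def.not.mp hgt.not_gt),
      if_neg (Fin.val_ne_of_ne hgt.ne'), Function.comp_apply, Fin.cycleRange_of_gt hgt']; rfl

theorem mergeAdjacent_zero {n : ℕ} (g : Fin (n + 2) → G) :
    mergeAdjacent 0 g = Function.update (g ∘ Fin.succ) 0 (g 0 + g 1) := by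
  simpa using mergeAdjacent_comp_cycleRange 0 g

theorem asymmetrization_comp_perm (n : ℕ) (c : (Fin n → G) → AddCircle (1 : ℝ))
    (g : Fin n → G) (σ : Perm (Fin n)) :
    asymmetrization n c (g ∘ σ) = (sign σ : ℤ) • asymmetrization n c g := by
  unfold asymmetrization
  rw [smul_sum]
  refine Fintype.sum_equiv (Equiv.mulLeft σ) _ _ fun τ => ?_
  rw [coe_mulLeft, Perm.coe_mul, Function.comp_assoc, Perm.sign_mul, Units.val_mul, ← mul_smul,
    ← mul_assoc, ← Units.val_mul, Int.units_mul_self, Units.val_one, one_mul]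

theorem sum_sign_smul_comp_succ_of_apply_zero {n : ℕ}
    (c : (Fin (n + 1) → G) → AddCircle (1 : ℝ)) (f : Fin (n + 2) → G) (v : Fin (n + 2)) :
    ∑ σ with σ 0 = v, (sign σ : ℤ) • c ((f ∘ σ) ∘ Fin.succ) =
      (sign (swap 0 v) : ℤ) • asymmetrization (n + 1) c ((f ∘ swap 0 v) ∘ Fin.succ) := by
  rw [sum_perm_apply_zero_eq, asymmetrization, smul_sum]
  refine sum_congr rfl fun τ _ => ?_
  have hcomp :
      (f ∘ decomposeFin.symm (v, τ)) ∘ Fin.succ = ((f ∘ swap 0 v) ∘ Fin.succ) ∘ τ := by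
    funext i; simp
  rw [hcomp, decomposeFin.symm_sign, ← sign_swap', swap_comm, Units.val_mul, mul_smul]

theorem sum_adjacent_sign_smul_mergeAdjacent {m : ℕ}
    (c : (Fin (m + 1) → G) → AddCircle (1 : ℝ)) (f : Fin (m + 2) → G) (k : Fin (m + 1)) :
    ∑ σ with σ k.castSucc = 0 ∧ σ k.succ = 1, (sign σ : ℤ) • c (mergeAdjacent k (f ∘ σ)) =
      (-1 : ℤ) ^ (k : ℕ) • ∑ τ with τ k = 0, (sign τ : ℤ) • c (mergeAdjacent 0 f ∘ τ) := by
  set W := Fin.cycleRange k.castSucc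
  have hW : ∀ ρ : Perm (Fin (m + 2)), (ρ * W) k.castSucc = ρ 0 ∧ (ρ * W) k.succ = ρ k.succ :=
    fun ρ => ⟨by simp [W], by simp [W, Fin.cycleRange_of_gt Fin.castSucc_lt_succ]⟩
  rw [← sum_equiv (Equiv.mulRight W) (s := {ρ | ρ 0 = 0 ∧ ρ k.succ = 1})
      (by simp [hW]) fun _ _ => rfl, ← filter_filter, sum_filter, sum_perm_apply_zero_eq,
    smul_sum, sum_filter]
  refine sum_congr rfl fun τ _ => ?_
  have hτk : decomposeFin.symm (0, τ) k.succ = 1 ↔ τ k = 0 := by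
    rw [decomposeFin_symm_apply_succ, swap_self, refl_apply, ← Fin.succ_zero_eq_one,
      Fin.succ_inj]
  by_cases hτ : τ k = 0
  · rw [if_pos (hτk.mpr hτ), if_pos hτ]
    have hsign : (sign (decomposeFin.symm (0, τ) * W) : ℤ) = (-1) ^ (k : ℕ) * sign τ := by
      simp [W, Fin.sign_cycleRange, mul_comm]
    have hsucc : (f ∘ decomposeFin.symm (0, τ)) ∘ Fin.succ = (f ∘ Fin.succ) ∘ τ := by
      funext i; simp
    have hmerge :
        mergeAdjacent k (f ∘ ⇑(decomposeFin.symm (0, τ) * W)) = mergeAdjacent 0 f ∘ τ := by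
      rw [Perm.coe_mul, ← Function.comp_assoc, mergeAdjacent_comp_cycleRange, mergeAdjacent_zero,
        Function.update_comp_equiv, hsucc, τ.symm_apply_eq.mpr hτ.symm]
      simp only [Function.comp_apply, decomposeFin_symm_apply_zero, hτk.mpr hτ]
    rw [coe_mulRight, hsign, hmerge, mul_smul]
  · rw [if_neg (hτk.not.mpr hτ), if_neg hτ]

theorem sum_inv_lt_sign_smul_sum_mergeAdjacent {m : ℕ}
    (c : (Fin (m + 1) → G) → AddCircle (1 : ℝ)) (f : Fin (m + 2) → G) :
    ∑ σ with σ⁻¹ 0 < σ⁻¹ 1, (sign σ : ℤ) •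
        ∑ k : Fin (m + 1), (-1 : ℤ) ^ ((k : ℕ) + 1) • c (mergeAdjacent k (f ∘ σ)) =
      -asymmetrization (m + 1) c (mergeAdjacent 0 f) := by
  have hk : ∀ k : Fin (m + 1),
      ∑ σ with σ⁻¹ 0 < σ⁻¹ 1,
          (-1 : ℤ) ^ ((k : ℕ) + 1) • (sign σ : ℤ) • c (mergeAdjacent k (f ∘ σ)) =
        -∑ τ with τ k = 0, (sign τ : ℤ) • c (mergeAdjacent 0 f ∘ τ) := by
    intro k
    have hanti : ∀ σ : Perm (Fin (m + 2)),
        (sign (σ * swap k.castSucc k.succ) : ℤ) •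
            c (mergeAdjacent k (f ∘ ⇑(σ * swap k.castSucc k.succ))) =
          -((sign σ : ℤ) • c (mergeAdjacent k (f ∘ σ))) := by
      intro σ
      rw [Perm.coe_mul, ← Function.comp_assoc, mergeAdjacent_comp_swap, Perm.sign_mul,
        sign_swap Fin.castSucc_lt_succ.ne, mul_neg_one, Units.val_neg, neg_smul]
    rw [← smul_sum, sum_inv_lt_eq_sum_adjacent k 0 1 _ hanti,
      sum_adjacent_sign_smul_mergeAdjacent, smul_smul, ← pow_add, Odd.neg_one_pow ⟨k, by ring⟩,
      neg_one_smul]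
  simp only [smul_sum, smul_comm (sign _ : ℤ) ((-1 : ℤ) ^ _)]
  rw [sum_comm, sum_congr rfl fun k _ => hk k, sum_neg_distrib, asymmetrization]
  rw [← sum_fiberwise (M := AddCircle (1 : ℝ)) univ fun τ : Perm (Fin (m + 1)) => τ⁻¹ 0]
  congr 1
  refine sum_congr rfl fun k _ => sum_congr (filter_congr fun τ _ => ?_) fun _ _ => rfl
  rw [inv_eq_iff_eq, eq_comm]

theorem sum_inv_lt_sign_smul_outer_faces {m : ℕ}
    (c : (Fin (m + 1) → G) → AddCircle (1 : ℝ)) (f : Fin (m + 2) → G) :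
    ∑ σ with σ⁻¹ 0 < σ⁻¹ 1, (sign σ : ℤ) • c ((f ∘ σ) ∘ Fin.succ) +
        ∑ σ with σ⁻¹ 0 < σ⁻¹ 1,
          (sign σ : ℤ) • (-1 : ℤ) ^ (m + 1 + 1) • c ((f ∘ σ) ∘ Fin.castSucc) =
      asymmetrization (m + 1) c (f ∘ Fin.succ) +
        asymmetrization (m + 1) c ((f ∘ swap 0 1) ∘ Fin.succ) := by
  set ρ := finRotate (m + 2)
  have hρ : ∀ i : Fin (m + 1), ρ⁻¹ i.succ = i.castSucc := fun i =>
    inv_eq_iff_eq.mpr (by rw [finRotate_apply, Fin.coeSucc_eq_succ])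
  have hlast : ∑ σ with σ⁻¹ 0 < σ⁻¹ 1, (sign σ : ℤ) • (-1 : ℤ) ^ (m + 1 + 1) •
        c ((f ∘ σ) ∘ Fin.castSucc) =
      -∑ σ with ρ.symm (σ⁻¹ 0) < ρ.symm (σ⁻¹ 1), (sign σ : ℤ) • c ((f ∘ σ) ∘ Fin.succ) := by
    rw [← sum_neg_distrib]
    refine sum_equiv (Equiv.mulRight ρ⁻¹) (fun σ => ?_) (fun σ _ => ?_)
    · simp only [mem_filter, mem_univ, true_and, coe_mulRight]
      rw [mul_inv_rev, inv_inv, Perm.mul_apply, Perm.mul_apply, ρ.symm_apply_apply,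
        ρ.symm_apply_apply]
    · have hcomp : (f ∘ ⇑(σ * ρ⁻¹)) ∘ Fin.succ = (f ∘ σ) ∘ Fin.castSucc := by
        funext i; simp only [Function.comp_apply, Perm.mul_apply, hρ]
      rw [coe_mulRight, hcomp, Perm.sign_mul, sign_inv, sign_finRotate, smul_smul, ← neg_smul]
      congr 1
      push_cast
      ring
  rw [hlast, ← sub_eq_add_neg, sum_inv_lt_sub_sum_finRotate,
    sum_sign_smul_comp_succ_of_apply_zero, sum_sign_smul_comp_succ_of_apply_zero]
  simp

theorem sum_inv_lt_sign_smul_coboundary {m : ℕ}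
    (c : (Fin (m + 1) → G) → AddCircle (1 : ℝ)) (f : Fin (m + 2) → G) :
    ∑ σ with σ⁻¹ 0 < σ⁻¹ 1, (sign σ : ℤ) • coboundary (m + 1) c (f ∘ σ) =
      asymmetrization (m + 1) c (f ∘ Fin.succ) +
        asymmetrization (m + 1) c ((f ∘ swap 0 1) ∘ Fin.succ) -
          asymmetrization (m + 1) c (mergeAdjacent 0 f) := by
  simp only [coboundary_apply, smul_add, sum_add_distrib]
  rw [add_right_comm, sum_inv_lt_sign_smul_outer_faces, sum_inv_lt_sign_smul_sum_mergeAdjacent,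
    sub_eq_add_neg]

theorem asymmetrization_cons_add {m : ℕ} {c : (Fin (m + 1) → G) → AddCircle (1 : ℝ)}
    (hc : coboundary (m + 1) c = 0) (x y : G) (t : Fin m → G) :
    asymmetrization (m + 1) c (Fin.cons (x + y) t) =
      asymmetrization (m + 1) c (Fin.cons x t) + asymmetrization (m + 1) c (Fin.cons y t) := by
  have key := sum_inv_lt_sign_smul_coboundary c (Fin.cons x (Fin.cons y t))
  have hy : (Fin.cons x (Fin.cons y t) : Fin (m + 2) → G) ∘ Fin.succ = Fin.cons y t :=
    Fin.tail_cons _ _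
  have hx :
      ((Fin.cons x (Fin.cons y t) : Fin (m + 2) → G) ∘ swap 0 1) ∘ Fin.succ = Fin.cons x t := by
    funext i
    cases i using Fin.cases with
    | zero => simp
    | succ i => simp [swap_apply_of_ne_of_ne, Fin.succ_ne_zero, Fin.succ_succ_ne_one]
  rw [mergeAdjacent_zero, hy, hx, Fin.cons_zero, Fin.cons_one, Fin.cons_zero,
    Fin.update_cons_zero, hc] at key
  simp only [Pi.zero_apply, smul_zero, sum_const_zero] at key
  rw [eq_sub_iff_add_eq, zero_add] at key
  rw [key, add_comm]

theorem asymmetrization_update {m : ℕ} (c : (Fin (m + 1) → G) → AddCircle (1 : ℝ))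
    (g : Fin (m + 1) → G) (i : Fin (m + 1)) (z : G) :
    asymmetrization (m + 1) c (Function.update g i z) =
      (sign (swap 0 i) : ℤ) •
        asymmetrization (m + 1) c (Fin.cons z (Fin.tail (g ∘ swap 0 i))) := by
  have hcomp : Function.update g i z ∘ swap 0 i = Fin.cons z (Fin.tail (g ∘ swap 0 i)) := by
    rw [Function.update_comp_equiv, symm_swap, swap_apply_right]
    conv_lhs => rw [← Fin.cons_self_tail (g ∘ swap 0 i)]
    exact Fin.update_cons_zero _ _ _
  rw [← hcomp, asymmetrization_comp_perm, smul_smul, ← Units.val_mul, Int.units_mul_self,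
    Units.val_one, one_smul]

end Cochains

/-- For any discrete abelian group `G` (possibly with torsion), the asymmetrization of
every `n`-cocycle `c ∈ Z^n(G,T)` is an asymmetric multicharacter: additive in each
variable and alternating under permutations of the variables. -/
theorem stmt_8 (G : Type*) [AddCommGroup G]
    (n : ℕ) (c : (Fin n → G) → AddCircle (1 : ℝ))
    (hc : coboundary n c = 0) :
    (∀ (g : Fin n → G) (i : Fin n) (x y : G),
        asymmetrization n c (Function.update g i (x + y)) =
          asymmetrization n c (Function.update g i x) +
            asymmetrization n c (Function.update g i y)) ∧
    (∀ (g : Fin n → G) (σ : Equiv.Perm (Fin n)),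
        asymmetrization n c (g ∘ σ) =
          (Equiv.Perm.sign σ : ℤ) • asymmetrization n c g) := by
  refine ⟨fun g i x y => ?_, asymmetrization_comp_perm n c⟩
  cases n with
  | zero => exact i.elim0
  | succ m =>
    rw [asymmetrization_update, asymmetrization_update, asymmetrization_update,
      asymmetrization_cons_add hc, smul_add]
end

section
/- With H = M ×_{n_M} G as above (G = ℤ^{<ℕ}, M strictly upper triangular integer matrices, n_M(g,h)_{jk} = e_j(g)e_k(h) for j<k), the commutator subgroup [H,H] equals M, and M is the center of H. -/
/-!
Since `n_M` is bilinear, the commutator of `(m, a)` and `(m', b)` in `H` is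
`(n_M(a, b) - n_M(b, a), 0)`. For generators `a_j, a_k` with `j < k` this is the matrix unit
`a_j ∧ a_k`, so these commutators generate `M`. Conversely, the commutator of `(m, a)` with
`(0, a_{j+1})` has the `j`-th coordinate of `a` as its `(j, j+1)` entry, so only elements of `M`
are central.
-/

/-- Index set of strictly upper triangular entries. -/
abbrev UTIdx : Type := {p : ℕ × ℕ // p.1 < p.2}

/-- `M`: strictly upper triangular ℤ-matrices indexed by `ℕ` with finitely many
nonzero entries. -/
abbrev UT : Type := UTIdx →₀ ℤ

/-- `G = ℤ^{<ℕ}`: the free abelian group on countably many generators. -/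
abbrev FreeAb : Type := ℕ →₀ ℤ

/-- The `M`-valued 2-cocycle `n_M` on `G`, with `(j,k)`-entry `e_j(g)·e_k(h)`, `j < k`. -/
noncomputable def nM (g h : FreeAb) : UT :=
  Finsupp.onFinset ((g.support ×ˢ h.support).subtype fun p => p.1 < p.2)
    (fun p => g p.1.1 * h p.1.2)
    (fun p hp => by
      have h1 : g p.1.1 ≠ 0 := fun h0 => hp (by simp [h0])
      have h2 : h p.1.2 ≠ 0 := fun h0 => hp (by simp [h0])
      simp only [Finset.mem_subtype, Finset.mem_product, Finsupp.mem_support_iff]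
      exact ⟨h1, h2⟩)

@[simp] lemma nM_apply (g h : FreeAb) (p : UTIdx) : nM g h p = g p.1.1 * h p.1.2 := rfl

lemma nM_add_left (g g' h : FreeAb) : nM (g + g') h = nM g h + nM g' h := by
  ext p; simp [add_mul]

lemma nM_add_right (g h h' : FreeAb) : nM g (h + h') = nM g h + nM g h' := by
  ext p; simp [mul_add]

lemma nM_neg_left (g h : FreeAb) : nM (-g) h = -nM g h := by
  ext p; simp

lemma nM_zero_left (h : FreeAb) : nM 0 h = 0 := by
  ext p; simp

lemma nM_zero_right (g : FreeAb) : nM g 0 = 0 := by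
  ext p; simp

/-- The central extension `H = M ×_{n_M} G`. -/
@[ext] structure HGrp where
  m : UT
  g : FreeAb

noncomputable instance : Mul HGrp := ⟨fun x y => ⟨x.m + y.m + nM x.g y.g, x.g + y.g⟩⟩
noncomputable instance : One HGrp := ⟨⟨0, 0⟩⟩
noncomputable instance : Inv HGrp := ⟨fun x => ⟨-x.m + nM x.g x.g, -x.g⟩⟩

@[simp] lemma HGrp.mul_m (x y : HGrp) : (x * y).m = x.m + y.m + nM x.g y.g := rfl
@[simp] lemma HGrp.mul_g (x y : HGrp) : (x * y).g = x.g + y.g := rfl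
@[simp] lemma HGrp.one_m : (1 : HGrp).m = 0 := rfl
@[simp] lemma HGrp.one_g : (1 : HGrp).g = 0 := rfl
@[simp] lemma HGrp.inv_m (x : HGrp) : x⁻¹.m = -x.m + nM x.g x.g := rfl
@[simp] lemma HGrp.inv_g (x : HGrp) : x⁻¹.g = -x.g := rfl

noncomputable instance : Group HGrp where
  mul_assoc a b c := by
    ext
    · simp [nM_add_left, nM_add_right]; abel
    · simp [add_assoc]
  one_mul a := by
    ext
    · simp [nM_zero_left]
    · simp
  mul_one a := by
    ext
    · simp [nM_zero_right]
    · simp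
  inv_mul_cancel a := by
    ext
    · simp [nM_neg_left]
    · simp

open scoped commutatorElement

lemma nM_neg_right (g h : FreeAb) : nM g (-h) = -nM g h := by
  ext p; simp

lemma nM_single_single_of_lt {j k : ℕ} (hjk : j < k) (c d : ℤ) :
    nM (Finsupp.single j c) (Finsupp.single k d) = Finsupp.single ⟨(j, k), hjk⟩ (c * d) := by
  ext ⟨⟨p₁, p₂⟩, hp⟩
  simp only [nM_apply, Finsupp.single_apply, Subtype.mk.injEq, Prod.mk.injEq]
  by_cases h₁ : j = p₁ <;> by_cases h₂ : k = p₂ <;> simp [h₁, h₂]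

lemma nM_single_single_of_le {j k : ℕ} (hkj : k ≤ j) (c d : ℤ) :
    nM (Finsupp.single j c) (Finsupp.single k d) = 0 := by
  ext ⟨⟨p₁, p₂⟩, hp⟩
  simp only [nM_apply, Finsupp.single_apply, Finsupp.coe_zero, Pi.zero_apply]
  split_ifs <;> simp_all; omega

namespace HGrp

/-- The copy of `M` in `H`. -/
def centralM : Subgroup HGrp where
  carrier := {x | x.g = 0}
  mul_mem' hx hy := by simp_all
  one_mem' := rfl
  inv_mem' hx := by simp_all

lemma mem_centralM {x : HGrp} : x ∈ centralM ↔ x.g = 0 := Iff.rfl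

lemma commutatorElement_eq (x y : HGrp) : ⁅x, y⁆ = ⟨nM x.g y.g - nM y.g x.g, 0⟩ := by
  rw [commutatorElement_def]
  ext : 1
  · simp only [mul_m, mul_g, inv_m, inv_g, nM_add_left, nM_neg_left, nM_neg_right]
    abel
  · simp

lemma commutatorElement_single_single {j k : ℕ} (hjk : j < k) (c : ℤ) :
    ⁅(⟨0, Finsupp.single j c⟩ : HGrp), (⟨0, Finsupp.single k 1⟩ : HGrp)⁆
      = ⟨Finsupp.single ⟨(j, k), hjk⟩ c, 0⟩ := by
  rw [commutatorElement_eq, nM_single_single_of_lt hjk, nM_single_single_of_le hjk.le,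
    sub_zero, mul_one]

lemma mk_mem_commutator (m : UT) : (⟨m, 0⟩ : HGrp) ∈ commutator HGrp := by
  induction m using Finsupp.induction with
  | zero => exact Subgroup.one_mem _
  | single_add p c m _ _ ih =>
    have hsingle : (⟨Finsupp.single p c, 0⟩ : HGrp) ∈ commutator HGrp := by
      rw [← commutatorElement_single_single p.2 c, commutator_def]
      exact Subgroup.commutator_mem_commutator (Subgroup.mem_top _) (Subgroup.mem_top _)
    have hsplit : (⟨Finsupp.single p c + m, 0⟩ : HGrp) = ⟨Finsupp.single p c, 0⟩ * ⟨m, 0⟩ := by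
      ext <;> simp [nM_zero_left]
    rw [hsplit]
    exact Subgroup.mul_mem _ hsingle ih

lemma commutator_eq_centralM : commutator HGrp = centralM := by
  apply le_antisymm
  · rw [commutator_def, Subgroup.commutator_le]
    intro x _ y _
    rw [mem_centralM, commutatorElement_eq]
  · intro x hx
    have hx : x = ⟨x.m, 0⟩ := HGrp.ext rfl hx
    rw [hx]
    exact mk_mem_commutator x.m

lemma center_eq_centralM : Subgroup.center HGrp = centralM := by
  ext x
  rw [Subgroup.mem_center_iff, mem_centralM]
  constructor
  · intro hx
    ext j
    have hcomm : ⁅x, (⟨0, Finsupp.single (j + 1) 1⟩ : HGrp)⁆ = 1 :=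
      commutatorElement_eq_one_iff_mul_comm.2 (hx _).symm
    -- the `(j, j+1)` entry of this commutator is the `j`-th coordinate of `x.g`
    have hentry := DFunLike.congr_fun (congrArg m hcomm) ⟨(j, j + 1), j.lt_succ_self⟩
    simpa [commutatorElement_eq] using hentry
  · intro hx y
    rw [← commutatorElement_eq_one_iff_mul_comm, commutatorElement_eq, hx, nM_zero_left,
      nM_zero_right, sub_zero]
    rfl

end HGrp

/-- The commutator subgroup `[H,H]` of `H = M ×_{n_M} G` equals the central copy of
`M` (the elements with vanishing `G`-component), and `M` is the center of `H`. -/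
theorem stmt_14 :
    ((commutator HGrp : Subgroup HGrp) : Set HGrp) = {x : HGrp | x.g = 0} ∧
    ((Subgroup.center HGrp : Set HGrp) = {x : HGrp | x.g = 0}) := by
  rw [HGrp.commutator_eq_centralM, HGrp.center_eq_centralM]
  exact ⟨rfl, rfl⟩
end

section
/- Let G = ℤ^{<ℕ} and H = M ×_{n_M} G with projection π₀: H → G. Then every third cocycle of G becomes a coboundary after pullback: π₀^*(Z³(G,T)) ⊆ B³(H,T). In particular, for the cocycle c_a(g₁,g₂,g₃) = exp(2πi Σ_{i<j<k} a(i,j,k) e_i(g₁)e_j(g₂)e_k(g₃)) with real coefficients a(i,j,k), the 2-cochain b_a(g₁,g₂) = exp(2πi Σ_{i<j<k} a(i,j,k) e_i(π₀(g₁)) B_{e_j,e_k}(g₂)), where B_{η,ζ}(g) = Σ_{j<k} η(a_j)ζ(a_k) e_{j,k}(m₀(g)), satisfies π₀^*(c_a) = ∂_H b_a. -/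
/-- Multiplication of the central extension `H = M ×_{n_M} G`; `π₀` is the second
projection. -/
noncomputable def Hmul (x y : UT × FreeAb) : UT × FreeAb :=
  (x.1 + y.1 + nM x.2 y.2, x.2 + y.2)

/-- The `(j,k)`-entry `e_{j,k}(m₀(y))` of the `M`-component of `y ∈ H` (equal to
`B_{e_j,e_k}(y)`). -/
def entryM (y : UT × FreeAb) (j k : ℕ) : ℤ :=
  if h : j < k then y.1 ⟨(j, k), h⟩ else 0

/-- The third cocycle `c_a(g₁,g₂,g₃) = exp(2πi Σ_{i<j<k} a(i,j,k)e_i(g₁)e_j(g₂)e_k(g₃))`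
of `G`, written additively with values in `T = ℝ/ℤ`. -/
noncomputable def ca (a : ℕ → ℕ → ℕ → ℝ) (g₁ g₂ g₃ : FreeAb) : AddCircle (1 : ℝ) :=
  ((∑ᶠ p : ℕ × ℕ × ℕ,
      if p.1 < p.2.1 ∧ p.2.1 < p.2.2 then
        a p.1 p.2.1 p.2.2 * (g₁ p.1 : ℝ) * (g₂ p.2.1 : ℝ) * (g₃ p.2.2 : ℝ)
      else 0 : ℝ) : AddCircle (1 : ℝ))

/-- The 2-cochain `b_a(x,y) = exp(2πi Σ_{i<j<k} a(i,j,k) e_i(π₀(x)) B_{e_j,e_k}(y))`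
of `H`, where `B_{e_j,e_k}(y) = e_{j,k}(m₀(y))`. -/
noncomputable def ba (a : ℕ → ℕ → ℕ → ℝ) (x y : UT × FreeAb) : AddCircle (1 : ℝ) :=
  ((∑ᶠ p : ℕ × ℕ × ℕ,
      if p.1 < p.2.1 ∧ p.2.1 < p.2.2 then
        a p.1 p.2.1 p.2.2 * (x.2 p.1 : ℝ) * (entryM y p.2.1 p.2.2 : ℝ)
      else 0 : ℝ) : AddCircle (1 : ℝ))


/-!
Write `C_A(g, h, l) = ∑_{i<j<k} A(i,j,k) g_i h_j l_k`.

Every 3-cocycle `c` of `G = ℤ^{<ℕ}` (with values in any abelian group) is `C_A` plus a coboundary,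
where `A(i,j,k)` is the alternating sum of `c` over the permutations of `(e_i, e_j, e_k)`. The bar
resolution and the Koszul resolution of `ℤ` over `ℤ[G]` both have explicit contracting homotopies:
for the Koszul one, `s(g ⊗ e_I) = ∑_{i < min I} ∑_{0 ≤ r < g_i} (r e_i + g_{>i}) ⊗ (e_i ∧ e_I)`,
which walks from `0` to `g` one coordinate at a time. Lifting through them gives chain maps
`f : Bar → Kos`, `ι : Kos → Bar` and a homotopy `h` with `id - ι f = h ∂ + ∂ h` up to degree 3, so
a 3-cocycle that vanishes on `ι(Kos₃)` is the coboundary of `c ∘ h₂`. This applies to `c - C_A`.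

On `H`, the `M`-component of `y z` gains `y_j z_k` in its `(j,k)` entry, so the pullback of `C_A` is
the coboundary of `b_A(x, y) = ∑_{i<j<k} A(i,j,k) x_i e_{j,k}(m₀(y))`.
-/

section SignedSum

variable {E : Type*} [AddCommGroup E]

/-- `∑_{0 ≤ r < n} f r`, taken with the opposite orientation `-∑_{n ≤ r < 0} f r` when `n < 0`. -/
def signedSum (n : ℤ) (f : ℤ → E) : E :=
  ∑ r ∈ Finset.range n.toNat, f r - ∑ r ∈ Finset.range (-n).toNat, f (-1 - r)

@[simp] lemma signedSum_zero (f : ℤ → E) : signedSum 0 f = 0 := by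
  simp [signedSum]

lemma signedSum_add_one (n : ℤ) (f : ℤ → E) : signedSum (n + 1) f = signedSum n f + f n := by
  unfold signedSum
  rcases le_or_gt 0 n with h | h
  · rw [show (n + 1).toNat = n.toNat + 1 by omega, show (-(n + 1)).toNat = 0 by omega,
      show (-n).toNat = 0 by omega, Finset.sum_range_succ, show ((n.toNat : ℕ) : ℤ) = n by omega]
    simp
  · rw [show (n + 1).toNat = 0 by omega, show n.toNat = 0 by omega,
      show (-n).toNat = (-(n + 1)).toNat + 1 by omega, Finset.sum_range_succ,
      show (-1 : ℤ) - ((-(n + 1)).toNat : ℤ) = n by omega]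
    simp

lemma signedSum_telescope (n : ℤ) (F : ℤ → E) :
    signedSum n (fun r => F (r + 1) - F r) = F n - F 0 := by
  induction n using Int.induction_on with
  | zero => simp
  | succ k ih => rw [signedSum_add_one, ih]; abel
  | pred k ih =>
    have h := signedSum_add_one (-(k : ℤ) - 1) (fun r => F (r + 1) - F r)
    rw [sub_add_cancel, ih] at h
    rw [eq_sub_of_add_eq h.symm]
    abel_nf

lemma map_signedSum {E' F : Type*} [AddCommGroup E'] [FunLike F E E'] [AddMonoidHomClass F E E']
    (L : F) (n : ℤ) (f : ℤ → E) : L (signedSum n f) = signedSum n (fun r => L (f r)) := by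
  simp [signedSum, map_sub, map_sum]

end SignedSum

/-- The free `ℤ[G]`-module `ℤ[G] ⊗ ℤ[X]` on `X`; `G` acts by translating the first coordinate. -/
abbrev FreeGMod (G X : Type*) : Type _ := G × X →₀ ℤ

namespace FreeGMod

open Finsupp

lemma hom_ext {G X M : Type*} [AddCommGroup M] {L L' : FreeGMod G X →ₗ[ℤ] M}
    (h : ∀ g x, L (single (g, x) 1) = L' (single (g, x) 1)) : L = L' :=
  lhom_ext' fun p => LinearMap.ext_ring (h p.1 p.2)

noncomputable section Monoid

variable {G : Type*} [AddMonoid G] {X Y Z : Type*}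

def translate (a : G) : FreeGMod G X →ₗ[ℤ] FreeGMod G X :=
  lmapDomain ℤ ℤ fun p => (a + p.1, p.2)

def cell (x : X) : FreeGMod G X := single (0, x) 1

def extend (φ : X → FreeGMod G Y) : FreeGMod G X →ₗ[ℤ] FreeGMod G Y :=
  linearCombination ℤ fun p => translate p.1 (φ p.2)

def IsEquivariant (L : FreeGMod G X →ₗ[ℤ] FreeGMod G Y) : Prop :=
  ∀ a v, L (translate a v) = translate a (L v)

@[simp] lemma translate_single (a : G) (p : G × X) (n : ℤ) :
    translate a (single p n) = single (a + p.1, p.2) n := by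
  simp [translate]

@[simp] lemma translate_cell (a : G) (x : X) : translate a (cell x) = single (a, x) 1 := by
  simp [cell]

lemma translate_translate (a b : G) (v : FreeGMod G X) :
    translate a (translate b v) = translate (a + b) v := by
  simp only [translate, lmapDomain_apply, ← mapDomain_comp]
  congr 1
  ext p <;> simp [add_assoc]

@[simp] lemma translate_zero (v : FreeGMod G X) : translate 0 v = v := by
  simp only [translate, lmapDomain_apply, zero_add]
  exact mapDomain_id

@[simp] lemma extend_single (φ : X → FreeGMod G Y) (p : G × X) :
    extend φ (single p 1) = translate p.1 (φ p.2) := by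
  simp [extend]

@[simp] lemma extend_cell (φ : X → FreeGMod G Y) (x : X) : extend φ (cell x) = φ x := by
  simp [cell]

lemma isEquivariant_extend (φ : X → FreeGMod G Y) : IsEquivariant (extend φ) := by
  intro a v
  have : extend φ ∘ₗ translate a = translate a ∘ₗ extend φ :=
    hom_ext fun g x => by simp [translate_translate]
  exact LinearMap.congr_fun this v

lemma isEquivariant_id : IsEquivariant (LinearMap.id : FreeGMod G X →ₗ[ℤ] FreeGMod G X) :=
  fun _ _ => rfl

namespace IsEquivariant

variable {L L' : FreeGMod G Y →ₗ[ℤ] FreeGMod G Z} {K : FreeGMod G X →ₗ[ℤ] FreeGMod G Y}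

lemma comp (hL : IsEquivariant L) (hK : IsEquivariant K) : IsEquivariant (L ∘ₗ K) :=
  fun a v => by simp [hK a v, hL a (K v)]

lemma sub (hL : IsEquivariant L) (hL' : IsEquivariant L') : IsEquivariant (L - L') :=
  fun a v => by simp [hL a v, hL' a v]

lemma map_single (hL : IsEquivariant L) (g : G) (y : Y) :
    L (single (g, y) 1) = translate g (L (cell y)) := by
  rw [← hL, translate_cell]

lemma ext (hL : IsEquivariant L) (hL' : IsEquivariant L') (h : ∀ y, L (cell y) = L' (cell y)) :
    L = L' :=
  hom_ext fun g y => by rw [← translate_cell, hL, hL', h]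

end IsEquivariant

/-- When `s` is a contracting homotopy of a resolution with differential `L`, lifting through `s`
builds comparison maps and chain homotopies degree by degree (`apply_contractLift`). -/
def contractLift (s : FreeGMod G Z →ₗ[ℤ] FreeGMod G Y) (F : FreeGMod G X →ₗ[ℤ] FreeGMod G Z) :
    FreeGMod G X →ₗ[ℤ] FreeGMod G Y :=
  extend fun x => s (F (cell x))

lemma isEquivariant_contractLift (s : FreeGMod G Z →ₗ[ℤ] FreeGMod G Y)
    (F : FreeGMod G X →ₗ[ℤ] FreeGMod G Z) : IsEquivariant (contractLift s F) :=
  isEquivariant_extend _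

lemma apply_contractLift {L : FreeGMod G Y →ₗ[ℤ] FreeGMod G Z} (hL : IsEquivariant L)
    {s : FreeGMod G Z →ₗ[ℤ] FreeGMod G Y} {F : FreeGMod G X →ₗ[ℤ] FreeGMod G Z}
    (hF : IsEquivariant F) (hs : ∀ x, L (s (F (cell x))) = F (cell x)) (v : FreeGMod G X) :
    L (contractLift s F v) = F v := by
  have : L ∘ₗ contractLift s F = F :=
    (hL.comp (isEquivariant_extend _)).ext hF fun x => by simp [hs]
  exact LinearMap.congr_fun this v

end Monoid

lemma isEquivariant_translate {G X : Type*} [AddCommMonoid G] (b : G) :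
    IsEquivariant (translate b : FreeGMod G X →ₗ[ℤ] FreeGMod G X) :=
  fun a v => by rw [translate_translate, translate_translate, add_comm]

noncomputable section Bar

variable {G : Type*} [AddMonoid G] {X : Type*}

def barD₁ : FreeGMod G G →ₗ[ℤ] FreeGMod G Unit :=
  extend fun g => single (g, ()) 1 - cell ()

def barD₂ : FreeGMod G (G × G) →ₗ[ℤ] FreeGMod G G :=
  extend fun x => single (x.1, x.2) 1 - cell (x.1 + x.2) + cell x.1

def barD₃ : FreeGMod G (G × G × G) →ₗ[ℤ] FreeGMod G (G × G) :=
  extend fun x => single (x.1, x.2) 1 - cell (x.1 + x.2.1, x.2.2) + cell (x.1, x.2.1 + x.2.2)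
    - cell (x.1, x.2.1)

def barD₄ : FreeGMod G (G × G × G × G) →ₗ[ℤ] FreeGMod G (G × G × G) :=
  extend fun x => single (x.1, x.2) 1 - cell (x.1 + x.2.1, x.2.2)
    + cell (x.1, x.2.1 + x.2.2.1, x.2.2.2) - cell (x.1, x.2.1, x.2.2.1 + x.2.2.2)
    + cell (x.1, x.2.1, x.2.2.1)

def altCells (a b c : G) : FreeGMod G (G × G × G) :=
  cell (a, b, c) - cell (b, a, c) + cell (b, c, a) - cell (c, b, a) + cell (c, a, b)
    - cell (a, c, b)

def barS₀ : FreeGMod G Unit →ₗ[ℤ] FreeGMod G G :=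
  lmapDomain ℤ ℤ fun p => (0, p.1)

def barS : FreeGMod G X →ₗ[ℤ] FreeGMod G (G × X) :=
  lmapDomain ℤ ℤ fun p => (0, p)

@[simp] lemma barS₀_single (g : G) : barS₀ (single (g, ()) 1) = cell g := by
  simp [barS₀, cell]

@[simp] lemma barS_single (g : G) (x : X) : barS (single (g, x) 1) = cell (g, x) := by
  simp [barS, cell]

lemma isEquivariant_barD₁ : IsEquivariant (barD₁ : FreeGMod G G →ₗ[ℤ] _) := isEquivariant_extend _
lemma isEquivariant_barD₂ : IsEquivariant (barD₂ : FreeGMod G (G × G) →ₗ[ℤ] _) :=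
  isEquivariant_extend _
lemma isEquivariant_barD₃ : IsEquivariant (barD₃ : FreeGMod G (G × G × G) →ₗ[ℤ] _) :=
  isEquivariant_extend _

lemma barD₂_barS (v : FreeGMod G G) : barD₂ (barS v) + barS₀ (barD₁ v) = v := by
  have : barD₂ ∘ₗ (barS : FreeGMod G G →ₗ[ℤ] _) + barS₀ ∘ₗ barD₁ = LinearMap.id :=
    hom_ext fun g x => by simp [barD₂, barD₁, cell]
  exact LinearMap.congr_fun this v

lemma barD₃_barS (v : FreeGMod G (G × G)) : barD₃ (barS v) + barS (barD₂ v) = v := by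
  have : barD₃ ∘ₗ (barS : FreeGMod G (G × G) →ₗ[ℤ] _) + barS ∘ₗ barD₂ = LinearMap.id :=
    hom_ext fun g x => by simp [barD₃, barD₂, cell]
  exact LinearMap.congr_fun this v

lemma barD₄_barS (v : FreeGMod G (G × G × G)) : barD₄ (barS v) + barS (barD₃ v) = v := by
  have : barD₄ ∘ₗ (barS : FreeGMod G (G × G × G) →ₗ[ℤ] _) + barS ∘ₗ barD₃ = LinearMap.id :=
    hom_ext fun g x => by simp [barD₄, barD₃, cell]
  exact LinearMap.congr_fun this v

lemma barD₁_barD₂ (v : FreeGMod G (G × G)) : barD₁ (barD₂ v) = 0 := by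
  have : barD₁ ∘ₗ barD₂ = (0 : FreeGMod G (G × G) →ₗ[ℤ] _) :=
    hom_ext fun g x => by simp [barD₁, barD₂, cell, add_assoc]
  exact LinearMap.congr_fun this v

lemma barD₂_barD₃ (v : FreeGMod G (G × G × G)) : barD₂ (barD₃ v) = 0 := by
  have : barD₂ ∘ₗ barD₃ = (0 : FreeGMod G (G × G × G) →ₗ[ℤ] _) :=
    hom_ext fun g x => by simp [barD₂, barD₃, cell, add_assoc]; abel
  exact LinearMap.congr_fun this v

end Bar

abbrev IncTriple : Type := {t : ℕ × ℕ × ℕ // t.1 < t.2.1 ∧ t.2.1 < t.2.2}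

noncomputable section Koszul

open Finset

variable {X : Type*}

def δ (i : ℕ) : FreeGMod FreeAb X →ₗ[ℤ] FreeGMod FreeAb X :=
  translate (single i 1) - LinearMap.id

def tail (g : FreeAb) (i : ℕ) : FreeAb := g.filter (i ≤ ·)

def pathSum (i : ℕ) (g : FreeAb) : FreeGMod FreeAb X →ₗ[ℤ] FreeGMod FreeAb X :=
  signedSum (g i) fun r => translate (single i r + tail g (i + 1))

lemma pathSum_apply (i : ℕ) (g : FreeAb) (v : FreeGMod FreeAb X) :
    pathSum i g v = signedSum (g i) fun r => translate (single i r + tail g (i + 1)) v := by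
  simp [pathSum, signedSum]

lemma tail_apply (g : FreeAb) (i j : ℕ) : tail g i j = if i ≤ j then g j else 0 := by
  simp [tail, filter_apply]

@[simp] lemma tail_zero (g : FreeAb) : tail g 0 = g := by
  ext j; simp [tail_apply]

lemma single_add_tail_succ (g : FreeAb) (i : ℕ) : single i (g i) + tail g (i + 1) = tail g i := by
  ext j
  rcases lt_trichotomy i j with h | rfl | h <;> simp [tail_apply, single_apply, *] <;> omega

lemma tail_eq_zero {g : FreeAb} {N : ℕ} (h : ∀ j, N ≤ j → g j = 0) : tail g N = 0 := by
  ext j; by_cases hj : N ≤ j <;> simp [tail_apply, hj, h]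

lemma tail_single_add_of_le {i m : ℕ} (h : i ≤ m) (g : FreeAb) :
    tail (single m 1 + g) i = single m 1 + tail g i := by
  ext j; by_cases hj : i ≤ j <;> simp [tail_apply, single_apply, hj]; omega

lemma tail_single_add_of_lt {i m : ℕ} (h : m < i) (g : FreeAb) :
    tail (single m 1 + g) i = tail g i := by
  ext j; by_cases hj : i ≤ j <;> simp [tail_apply, single_apply, hj]; omega

lemma isEquivariant_δ (i : ℕ) : IsEquivariant (δ i : FreeGMod FreeAb X →ₗ[ℤ] _) :=
  (isEquivariant_translate _).sub isEquivariant_id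

lemma δ_single (i : ℕ) (p : FreeAb × X) :
    δ i (single p 1) = single (single i 1 + p.1, p.2) 1 - single p 1 := by
  simp [δ]

lemma pathSum_of_apply_eq_zero {i : ℕ} {g : FreeAb} (h : g i = 0) (v : FreeGMod FreeAb X) :
    pathSum i g v = 0 := by
  simp [pathSum_apply, h]

lemma IsEquivariant.map_pathSum {Y : Type*} {L : FreeGMod FreeAb X →ₗ[ℤ] FreeGMod FreeAb Y}
    (hL : IsEquivariant L) (i : ℕ) (g : FreeAb) (v : FreeGMod FreeAb X) :
    L (pathSum i g v) = pathSum i g (L v) := by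
  simp only [pathSum_apply, map_signedSum]
  exact congrArg _ (funext fun r => hL _ v)

lemma δ_pathSum (i : ℕ) (g : FreeAb) (v : FreeGMod FreeAb X) :
    δ i (pathSum i g v) = translate (tail g i) v - translate (tail g (i + 1)) v := by
  have step : ∀ r : ℤ, δ i (translate (single i r + tail g (i + 1)) v) =
      translate (single i (r + 1) + tail g (i + 1)) v
        - translate (single i r + tail g (i + 1)) v := by
    intro r
    simp [δ, translate_translate, ← add_assoc, ← single_add, add_comm]
  rw [pathSum_apply, map_signedSum, funext step,
    signedSum_telescope (g i) fun r => translate (single i r + tail g (i + 1)) v,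
    single_add_tail_succ, single_zero, zero_add]

lemma pathSum_single_add_of_lt {i m : ℕ} (h : i < m) (g : FreeAb) (v : FreeGMod FreeAb X) :
    pathSum i (single m 1 + g) v = translate (single m 1) (pathSum i g v) := by
  simp only [pathSum_apply, map_signedSum, translate_translate,
    tail_single_add_of_le (by omega : i + 1 ≤ m), Finsupp.add_apply, single_apply, if_neg h.ne',
    zero_add, add_left_comm]

lemma pathSum_single_add_of_gt {i m : ℕ} (h : m < i) (g : FreeAb) (v : FreeGMod FreeAb X) :
    pathSum i (single m 1 + g) v = pathSum i g v := by
  simp only [pathSum_apply, tail_single_add_of_lt (by omega : m < i + 1), Finsupp.add_apply,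
    single_apply, if_neg h.ne, zero_add]

lemma pathSum_single_add_self (i : ℕ) (g : FreeAb) (v : FreeGMod FreeAb X) :
    pathSum i (single i 1 + g) v = pathSum i g v + translate (tail g i) v := by
  simp only [pathSum_apply, tail_single_add_of_lt (by omega : i < i + 1), Finsupp.add_apply,
    single_eq_same, add_comm (1 : ℤ), signedSum_add_one, single_add_tail_succ]

lemma δ_apply (m : ℕ) (v : FreeGMod FreeAb X) : δ m v = translate (single m 1) v - v := rfl

lemma sum_pathSum_single_add_sub_of_lt {m n : ℕ} (h : m < n) (g : FreeAb)
    (w : ℕ → FreeGMod FreeAb X) :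
    ∑ i ∈ range n, (pathSum i (single m 1 + g) (w i) - pathSum i g (w i)) =
      ∑ i ∈ range m, δ m (pathSum i g (w i)) + translate (tail g m) (w m) := by
  have above : ∑ i ∈ Ico (m + 1) n, (pathSum i (single m 1 + g) (w i) - pathSum i g (w i)) = 0 :=
    sum_eq_zero fun i hi => by rw [pathSum_single_add_of_gt (mem_Ico.1 hi).1, sub_self]
  have below : ∑ i ∈ range m, (pathSum i (single m 1 + g) (w i) - pathSum i g (w i)) =
      ∑ i ∈ range m, δ m (pathSum i g (w i)) :=
    sum_congr rfl fun i hi => by rw [pathSum_single_add_of_lt (mem_range.1 hi), δ_apply]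
  rw [← sum_range_add_sum_Ico _ (Nat.succ_le_of_lt h), above, sum_range_succ, below,
    pathSum_single_add_self]
  abel

lemma sum_pathSum_single_add_sub_of_le {m n : ℕ} (h : n ≤ m) (g : FreeAb)
    (w : ℕ → FreeGMod FreeAb X) :
    ∑ i ∈ range n, (pathSum i (single m 1 + g) (w i) - pathSum i g (w i)) =
      ∑ i ∈ range n, δ m (pathSum i g (w i)) :=
  sum_congr rfl fun i hi => by
    rw [pathSum_single_add_of_lt (by have := mem_range.1 hi; omega), δ_apply]

lemma sum_δ_pathSum (n : ℕ) (g : FreeAb) (v : FreeGMod FreeAb X) :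
    ∑ i ∈ range n, δ i (pathSum i g v) = translate g v - translate (tail g n) v := by
  simp only [δ_pathSum]
  rw [sum_range_sub' (fun i => translate (tail g i) v), tail_zero]

def cell₂ (i j : ℕ) : FreeGMod FreeAb UTIdx :=
  if h : i < j then cell ⟨(i, j), h⟩ else 0

def cell₃ (i j k : ℕ) : FreeGMod FreeAb IncTriple :=
  if h : i < j ∧ j < k then cell ⟨(i, j, k), h⟩ else 0

def koszulD₁ : FreeGMod FreeAb ℕ →ₗ[ℤ] FreeGMod FreeAb Unit :=
  extend fun i => δ i (cell ())

def koszulD₂ : FreeGMod FreeAb UTIdx →ₗ[ℤ] FreeGMod FreeAb ℕ :=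
  extend fun τ => δ τ.1.1 (cell τ.1.2) - δ τ.1.2 (cell τ.1.1)

def koszulD₃ : FreeGMod FreeAb IncTriple →ₗ[ℤ] FreeGMod FreeAb UTIdx :=
  extend fun τ => δ τ.1.1 (cell₂ τ.1.2.1 τ.1.2.2) - δ τ.1.2.1 (cell₂ τ.1.1 τ.1.2.2)
    + δ τ.1.2.2 (cell₂ τ.1.1 τ.1.2.1)

def koszulS₀ : FreeGMod FreeAb Unit →ₗ[ℤ] FreeGMod FreeAb ℕ :=
  linearCombination ℤ fun p => ∑ᶠ i, pathSum i p.1 (cell i)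

def koszulS₁ : FreeGMod FreeAb ℕ →ₗ[ℤ] FreeGMod FreeAb UTIdx :=
  linearCombination ℤ fun p => ∑ i ∈ range p.2, pathSum i p.1 (cell₂ i p.2)

def koszulS₂ : FreeGMod FreeAb UTIdx →ₗ[ℤ] FreeGMod FreeAb IncTriple :=
  linearCombination ℤ fun p => ∑ i ∈ range p.2.1.1, pathSum i p.1 (cell₃ i p.2.1.1 p.2.1.2)

lemma isEquivariant_koszulD₁ : IsEquivariant koszulD₁ := isEquivariant_extend _
lemma isEquivariant_koszulD₂ : IsEquivariant koszulD₂ := isEquivariant_extend _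
lemma isEquivariant_koszulD₃ : IsEquivariant koszulD₃ := isEquivariant_extend _

lemma koszulD₂_cell₂ {i j : ℕ} (h : i < j) :
    koszulD₂ (cell₂ i j) = δ i (cell j) - δ j (cell i) := by
  simp [cell₂, h, koszulD₂]

lemma koszulD₃_cell₃ {i j k : ℕ} (h : i < j ∧ j < k) :
    koszulD₃ (cell₃ i j k) = δ i (cell₂ j k) - δ j (cell₂ i k) + δ k (cell₂ i j) := by
  simp [cell₃, h, koszulD₃]

lemma exists_gt_apply_eq_zero_of_le (g : FreeAb) (n : ℕ) : ∃ N, n < N ∧ ∀ j, N ≤ j → g j = 0 := by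
  refine ⟨g.support.sup id + n + 1, by omega, fun j hj => ?_⟩
  by_contra hg
  have := le_sup (f := id) (mem_support_iff.2 hg)
  simp only [id] at this
  omega

lemma koszulS₀_single {g : FreeAb} {N : ℕ} (hN : ∀ j, N ≤ j → g j = 0) :
    koszulS₀ (single (g, ()) 1) = ∑ i ∈ range N, pathSum i g (cell i) := by
  rw [koszulS₀, linearCombination_single, one_smul]
  refine finsum_eq_sum_of_support_subset _ fun i hi => ?_
  by_contra hiN
  exact hi (pathSum_of_apply_eq_zero (hN i (by simpa using hiN)) _)

lemma koszulD₁_koszulS₀_single (g : FreeAb) :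
    koszulD₁ (koszulS₀ (single (g, ()) 1)) = single (g, ()) 1 - cell () := by
  obtain ⟨N, -, hN⟩ := exists_gt_apply_eq_zero_of_le g 0
  have term : ∀ i, koszulD₁ (pathSum i g (cell i)) = δ i (pathSum i g (cell ())) := fun i => by
    rw [isEquivariant_koszulD₁.map_pathSum, koszulD₁, extend_cell, (isEquivariant_δ i).map_pathSum]
  rw [koszulS₀_single hN, map_sum, sum_congr rfl fun i _ => term i, sum_δ_pathSum, tail_eq_zero hN]
  simp [cell]

lemma koszulS₀_δ_single (m : ℕ) (g : FreeAb) :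
    koszulS₀ (δ m (single (g, ()) 1)) =
      ∑ i ∈ range m, δ m (pathSum i g (cell i)) + translate (tail g m) (cell m) := by
  obtain ⟨N, hmN, hN⟩ := exists_gt_apply_eq_zero_of_le g m
  have hN' : ∀ j, N ≤ j → (single m 1 + g : FreeAb) j = 0 := fun j hj => by
    simp [hN j hj, show m ≠ j by omega]
  rw [δ_single, map_sub, koszulS₀_single hN, koszulS₀_single hN', ← sum_sub_distrib,
    sum_pathSum_single_add_sub_of_lt hmN]

lemma koszulD₁_single (g : FreeAb) (j : ℕ) :
    koszulD₁ (single (g, j) 1) = δ j (single (g, ()) 1) := by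
  rw [isEquivariant_koszulD₁.map_single, koszulD₁, extend_cell, ← isEquivariant_δ, translate_cell]

lemma koszulD₂_single (g : FreeAb) (τ : UTIdx) :
    koszulD₂ (single (g, τ) 1) = δ τ.1.1 (single (g, τ.1.2) 1) - δ τ.1.2 (single (g, τ.1.1) 1) := by
  rw [isEquivariant_koszulD₂.map_single, koszulD₂, extend_cell, map_sub, ← isEquivariant_δ,
    ← isEquivariant_δ, translate_cell, translate_cell]

lemma koszulS₁_single (g : FreeAb) (j : ℕ) :
    koszulS₁ (single (g, j) 1) = ∑ i ∈ range j, pathSum i g (cell₂ i j) := by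
  simp [koszulS₁]

lemma koszulS₂_single (g : FreeAb) (τ : UTIdx) :
    koszulS₂ (single (g, τ) 1) = ∑ i ∈ range τ.1.1, pathSum i g (cell₃ i τ.1.1 τ.1.2) := by
  simp [koszulS₂]

lemma koszulS₁_δ_single (m n : ℕ) (g : FreeAb) :
    koszulS₁ (δ m (single (g, n) 1)) =
      ∑ i ∈ range n, (pathSum i (single m 1 + g) (cell₂ i n) - pathSum i g (cell₂ i n)) := by
  rw [δ_single, map_sub, koszulS₁_single, koszulS₁_single, sum_sub_distrib]

lemma koszulD₂_koszulS₁ (v : FreeGMod FreeAb ℕ) :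
    koszulD₂ (koszulS₁ v) + koszulS₀ (koszulD₁ v) = v := by
  have : koszulD₂ ∘ₗ koszulS₁ + koszulS₀ ∘ₗ koszulD₁ = LinearMap.id := hom_ext fun g j => by
    have term : ∀ i ∈ range j, koszulD₂ (pathSum i g (cell₂ i j)) =
        δ i (pathSum i g (cell j)) - δ j (pathSum i g (cell i)) := fun i hi => by
      rw [isEquivariant_koszulD₂.map_pathSum, koszulD₂_cell₂ (mem_range.1 hi), map_sub,
        (isEquivariant_δ i).map_pathSum, (isEquivariant_δ j).map_pathSum]
    simp only [LinearMap.add_apply, LinearMap.comp_apply, LinearMap.id_apply]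
    rw [koszulS₁_single, map_sum, sum_congr rfl term, sum_sub_distrib, sum_δ_pathSum,
      koszulD₁_single, koszulS₀_δ_single, translate_cell, translate_cell]
    abel
  exact LinearMap.congr_fun this v

lemma koszulD₃_koszulS₂ (v : FreeGMod FreeAb UTIdx) :
    koszulD₃ (koszulS₂ v) + koszulS₁ (koszulD₂ v) = v := by
  have : koszulD₃ ∘ₗ koszulS₂ + koszulS₁ ∘ₗ koszulD₂ = LinearMap.id := hom_ext fun g τ => by
    obtain ⟨⟨j, k⟩, hjk⟩ := τ
    have term : ∀ i ∈ range j, koszulD₃ (pathSum i g (cell₃ i j k)) =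
        δ i (pathSum i g (cell₂ j k)) - δ j (pathSum i g (cell₂ i k))
          + δ k (pathSum i g (cell₂ i j)) := fun i hi => by
      rw [isEquivariant_koszulD₃.map_pathSum, koszulD₃_cell₃ ⟨mem_range.1 hi, hjk⟩, map_add,
        map_sub, (isEquivariant_δ i).map_pathSum, (isEquivariant_δ j).map_pathSum,
        (isEquivariant_δ k).map_pathSum]
    have hcell : translate g (cell₂ j k) = single (g, ⟨(j, k), hjk⟩) 1 := by
      simp [cell₂, hjk]
    simp only [LinearMap.add_apply, LinearMap.comp_apply, LinearMap.id_apply]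
    rw [koszulS₂_single, map_sum, sum_congr rfl term, sum_add_distrib, sum_sub_distrib,
      sum_δ_pathSum, koszulD₂_single, map_sub, koszulS₁_δ_single, koszulS₁_δ_single,
      sum_pathSum_single_add_sub_of_lt hjk, sum_pathSum_single_add_sub_of_le hjk.le, hcell]
    abel
  exact LinearMap.congr_fun this v

end Koszul

noncomputable section Comparison

def koszulToBar₁ : FreeGMod FreeAb ℕ →ₗ[ℤ] FreeGMod FreeAb FreeAb :=
  extend fun i => cell (single i 1)

def koszulToBar₂ : FreeGMod FreeAb UTIdx →ₗ[ℤ] FreeGMod FreeAb (FreeAb × FreeAb) :=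
  extend fun τ => cell (single τ.1.1 1, single τ.1.2 1) - cell (single τ.1.2 1, single τ.1.1 1)

def koszulToBar₃ : FreeGMod FreeAb IncTriple →ₗ[ℤ] FreeGMod FreeAb (FreeAb × FreeAb × FreeAb) :=
  extend fun τ => altCells (single τ.1.1 1) (single τ.1.2.1 1) (single τ.1.2.2 1)

lemma barD₁_koszulToBar₁ (v : FreeGMod FreeAb ℕ) : barD₁ (koszulToBar₁ v) = koszulD₁ v := by
  have : barD₁ ∘ₗ koszulToBar₁ = koszulD₁ :=
    (isEquivariant_barD₁.comp (isEquivariant_extend _)).ext isEquivariant_koszulD₁ fun i => by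
      simp [barD₁, koszulD₁, δ, cell]
  exact LinearMap.congr_fun this v

lemma barD₂_koszulToBar₂ (v : FreeGMod FreeAb UTIdx) :
    barD₂ (koszulToBar₂ v) = koszulToBar₁ (koszulD₂ v) := by
  have : barD₂ ∘ₗ koszulToBar₂ = koszulToBar₁ ∘ₗ koszulD₂ :=
    (isEquivariant_barD₂.comp (isEquivariant_extend _)).ext
      ((isEquivariant_extend _).comp isEquivariant_koszulD₂) fun τ => by
        simp [koszulToBar₁, barD₂, koszulD₂, δ, cell]
        rw [add_comm (single τ.1.2 1 : FreeAb)]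
        abel
  exact LinearMap.congr_fun this v

lemma barD₃_koszulToBar₃ (v : FreeGMod FreeAb IncTriple) :
    barD₃ (koszulToBar₃ v) = koszulToBar₂ (koszulD₃ v) := by
  have : barD₃ ∘ₗ koszulToBar₃ = koszulToBar₂ ∘ₗ koszulD₃ :=
    (isEquivariant_barD₃.comp (isEquivariant_extend _)).ext
      ((isEquivariant_extend _).comp isEquivariant_koszulD₃) fun τ => by
        obtain ⟨⟨i, j, k⟩, hij, hjk⟩ := τ
        simp [altCells, koszulToBar₂, barD₃, koszulD₃, cell₂, hij, hjk, hij.trans hjk, δ, cell]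
        rw [add_comm (single j 1 : FreeAb) (single i 1),
          add_comm (single k 1 : FreeAb) (single j 1), add_comm (single k 1 : FreeAb) (single i 1)]
        abel
  exact LinearMap.congr_fun this v

lemma isEquivariant_koszulToBar₁ : IsEquivariant koszulToBar₁ := isEquivariant_extend _
lemma isEquivariant_koszulToBar₂ : IsEquivariant koszulToBar₂ := isEquivariant_extend _

def barToKoszul₁ : FreeGMod FreeAb FreeAb →ₗ[ℤ] FreeGMod FreeAb ℕ :=
  contractLift koszulS₀ barD₁

def barToKoszul₂ : FreeGMod FreeAb (FreeAb × FreeAb) →ₗ[ℤ] FreeGMod FreeAb UTIdx :=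
  contractLift koszulS₁ (barToKoszul₁ ∘ₗ barD₂)

def barToKoszul₃ : FreeGMod FreeAb (FreeAb × FreeAb × FreeAb) →ₗ[ℤ] FreeGMod FreeAb IncTriple :=
  contractLift koszulS₂ (barToKoszul₂ ∘ₗ barD₃)

lemma isEquivariant_barToKoszul₁ : IsEquivariant barToKoszul₁ := isEquivariant_contractLift _ _
lemma isEquivariant_barToKoszul₂ : IsEquivariant barToKoszul₂ := isEquivariant_contractLift _ _

lemma koszulS₀_cell : koszulS₀ (cell ()) = 0 := by
  rw [cell, koszulS₀_single (N := 0) fun _ _ => rfl, Finset.sum_range_zero]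

lemma koszulD₁_barToKoszul₁ (v : FreeGMod FreeAb FreeAb) : koszulD₁ (barToKoszul₁ v) = barD₁ v := by
  rw [barToKoszul₁]
  refine apply_contractLift isEquivariant_koszulD₁ isEquivariant_barD₁ (fun g => ?_) v
  rw [barD₁, extend_cell, map_sub, map_sub, koszulD₁_koszulS₀_single, koszulS₀_cell, map_zero,
    sub_zero]

lemma koszulD₂_barToKoszul₂ (v : FreeGMod FreeAb (FreeAb × FreeAb)) :
    koszulD₂ (barToKoszul₂ v) = barToKoszul₁ (barD₂ v) := by
  rw [barToKoszul₂]
  refine apply_contractLift isEquivariant_koszulD₂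
    (isEquivariant_barToKoszul₁.comp isEquivariant_barD₂) (fun x => ?_) v
  have := koszulD₂_koszulS₁ (barToKoszul₁ (barD₂ (cell x)))
  rwa [koszulD₁_barToKoszul₁, barD₁_barD₂, map_zero, add_zero] at this

lemma koszulD₃_barToKoszul₃ (v : FreeGMod FreeAb (FreeAb × FreeAb × FreeAb)) :
    koszulD₃ (barToKoszul₃ v) = barToKoszul₂ (barD₃ v) := by
  rw [barToKoszul₃]
  refine apply_contractLift isEquivariant_koszulD₃
    (isEquivariant_barToKoszul₂.comp isEquivariant_barD₃) (fun x => ?_) v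
  have := koszulD₃_koszulS₂ (barToKoszul₂ (barD₃ (cell x)))
  rwa [koszulD₂_barToKoszul₂, barD₂_barD₃, map_zero, map_zero, add_zero] at this

def barHomotopy₁ : FreeGMod FreeAb FreeAb →ₗ[ℤ] FreeGMod FreeAb (FreeAb × FreeAb) :=
  contractLift barS (LinearMap.id - koszulToBar₁ ∘ₗ barToKoszul₁)

def barHomotopy₂ :
    FreeGMod FreeAb (FreeAb × FreeAb) →ₗ[ℤ] FreeGMod FreeAb (FreeAb × FreeAb × FreeAb) :=
  contractLift barS (LinearMap.id - koszulToBar₂ ∘ₗ barToKoszul₂ - barHomotopy₁ ∘ₗ barD₂)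

lemma isEquivariant_barHomotopy₁ : IsEquivariant barHomotopy₁ := isEquivariant_contractLift _ _
lemma isEquivariant_barHomotopy₂ : IsEquivariant barHomotopy₂ := isEquivariant_contractLift _ _

lemma barD₂_barHomotopy₁ (v : FreeGMod FreeAb FreeAb) :
    barD₂ (barHomotopy₁ v) = v - koszulToBar₁ (barToKoszul₁ v) := by
  rw [barHomotopy₁]
  refine apply_contractLift isEquivariant_barD₂
    (isEquivariant_id.sub (isEquivariant_koszulToBar₁.comp isEquivariant_barToKoszul₁))
    (fun x => ?_) v
  simp only [LinearMap.sub_apply, LinearMap.id_apply, LinearMap.comp_apply]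
  have := barD₂_barS (cell x - koszulToBar₁ (barToKoszul₁ (cell x)))
  rwa [map_sub barD₁, barD₁_koszulToBar₁, koszulD₁_barToKoszul₁, sub_self, map_zero,
    add_zero] at this

lemma barD₃_barHomotopy₂ (v : FreeGMod FreeAb (FreeAb × FreeAb)) :
    barD₃ (barHomotopy₂ v) = v - koszulToBar₂ (barToKoszul₂ v) - barHomotopy₁ (barD₂ v) := by
  rw [barHomotopy₂]
  refine apply_contractLift isEquivariant_barD₃
    ((isEquivariant_id.sub (isEquivariant_koszulToBar₂.comp isEquivariant_barToKoszul₂)).sub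
      (isEquivariant_barHomotopy₁.comp isEquivariant_barD₂)) (fun x => ?_) v
  simp only [LinearMap.sub_apply, LinearMap.id_apply, LinearMap.comp_apply]
  have := barD₃_barS (cell x - koszulToBar₂ (barToKoszul₂ (cell x)) - barHomotopy₁ (barD₂ (cell x)))
  rwa [map_sub barD₂, map_sub barD₂, barD₂_koszulToBar₂, koszulD₂_barToKoszul₂, barD₂_barHomotopy₁,
    sub_self, map_zero, add_zero] at this

lemma barD₃_sub_koszulToBar₃_sub_barHomotopy₂ (v : FreeGMod FreeAb (FreeAb × FreeAb × FreeAb)) :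
    barD₃ (v - koszulToBar₃ (barToKoszul₃ v) - barHomotopy₂ (barD₃ v)) = 0 := by
  rw [map_sub, map_sub, barD₃_koszulToBar₃, koszulD₃_barToKoszul₃, barD₃_barHomotopy₂,
    barD₂_barD₃, map_zero]
  abel

theorem apply_eq_apply_barHomotopy₂_barD₃ {T : Type*} [AddCommGroup T]
    (φ : FreeGMod FreeAb (FreeAb × FreeAb × FreeAb) →ₗ[ℤ] T) (hφ : ∀ v, φ (barD₄ v) = 0)
    (hφK : ∀ v, φ (koszulToBar₃ v) = 0) (v : FreeGMod FreeAb (FreeAb × FreeAb × FreeAb)) :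
    φ v = φ (barHomotopy₂ (barD₃ v)) := by
  have hcycle := barD₄_barS (v - koszulToBar₃ (barToKoszul₃ v) - barHomotopy₂ (barD₃ v))
  rw [barD₃_sub_koszulToBar₃_sub_barHomotopy₂, map_zero, add_zero] at hcycle
  calc φ v = φ (koszulToBar₃ (barToKoszul₃ v)) + φ (barHomotopy₂ (barD₃ v))
        + φ (v - koszulToBar₃ (barToKoszul₃ v) - barHomotopy₂ (barD₃ v)) := by
          rw [← map_add, ← map_add]; congr 1; abel
    _ = φ (barHomotopy₂ (barD₃ v)) := by rw [hφK, ← hcycle, hφ, zero_add, add_zero]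

end Comparison

end FreeGMod

section Cochains

open Finsupp FreeGMod

variable {G T : Type*} [AddCommGroup T]

def IsCocycle₃ [Add G] (c : G → G → G → T) : Prop :=
  ∀ g₁ g₂ g₃ g₄, c g₂ g₃ g₄ - c (g₁ + g₂) g₃ g₄ + c g₁ (g₂ + g₃) g₄ - c g₁ g₂ (g₃ + g₄)
    + c g₁ g₂ g₃ = 0

lemma IsCocycle₃.sub [Add G] {c c' : G → G → G → T} (hc : IsCocycle₃ c) (hc' : IsCocycle₃ c') :
    IsCocycle₃ fun g h l => c g h l - c' g h l := fun g₁ g₂ g₃ g₄ => by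
  have := congrArg₂ (· - ·) (hc g₁ g₂ g₃ g₄) (hc' g₁ g₂ g₃ g₄)
  rw [sub_zero] at this
  beta_reduce
  rw [← this]
  abel

noncomputable def cochainEval (c : G → G → G → T) : FreeGMod G (G × G × G) →ₗ[ℤ] T :=
  linearCombination ℤ fun p => c p.2.1 p.2.2.1 p.2.2.2

@[simp] lemma cochainEval_single (c : G → G → G → T) (p : G × G × G × G) :
    cochainEval c (single p 1) = c p.2.1 p.2.2.1 p.2.2.2 := by
  simp [cochainEval]

lemma cochainEval_translate [AddMonoid G] (c : G → G → G → T) (a : G) (v : FreeGMod G (G × G × G)) :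
    cochainEval c (translate a v) = cochainEval c v := by
  have : cochainEval c ∘ₗ translate a = cochainEval c := hom_ext fun g x => by simp
  exact LinearMap.congr_fun this v

lemma IsCocycle₃.cochainEval_barD₄ [AddMonoid G] {c : G → G → G → T} (hc : IsCocycle₃ c)
    (v : FreeGMod G (G × G × G × G)) : cochainEval c (barD₄ v) = 0 := by
  have : cochainEval c ∘ₗ barD₄ = 0 := hom_ext fun g x => by
    simpa [barD₄, cell] using hc x.1 x.2.1 x.2.2.1 x.2.2.2
  exact LinearMap.congr_fun this v

/-- `c` evaluated on the image of the Koszul cell `e_i ∧ e_j ∧ e_k` in the bar complex. -/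
noncomputable def alternatization (c : FreeAb → FreeAb → FreeAb → T) (p : ℕ × ℕ × ℕ) : T :=
  cochainEval c (altCells (single p.1 1) (single p.2.1 1) (single p.2.2 1))

lemma alternatization_sub (c c' : FreeAb → FreeAb → FreeAb → T) (p : ℕ × ℕ × ℕ) :
    alternatization (fun g h l => c g h l - c' g h l) p =
      alternatization c p - alternatization c' p := by
  have : cochainEval (fun g h l => c g h l - c' g h l) = cochainEval c - cochainEval c' :=
    hom_ext fun _ _ => by simp
  rw [alternatization, alternatization, alternatization, this, LinearMap.sub_apply]

lemma cochainEval_koszulToBar₃ {c : FreeAb → FreeAb → FreeAb → T}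
    (hc : ∀ τ : IncTriple, alternatization c τ.1 = 0) (v : FreeGMod FreeAb IncTriple) :
    cochainEval c (koszulToBar₃ v) = 0 := by
  have : cochainEval c ∘ₗ koszulToBar₃ = 0 := hom_ext fun g τ => by
    simpa [koszulToBar₃, cochainEval_translate, alternatization] using hc τ
  exact LinearMap.congr_fun this v

theorem IsCocycle₃.exists_eq_coboundary_of_alternatization_eq_zero
    {c : FreeAb → FreeAb → FreeAb → T} (hc : IsCocycle₃ c)
    (halt : ∀ τ : IncTriple, alternatization c τ.1 = 0) :
    ∃ β : FreeAb → FreeAb → T, ∀ g h l,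
      c g h l = β h l - β (g + h) l + β g (h + l) - β g h := by
  set φ := cochainEval c
  refine ⟨fun g h => φ (barHomotopy₂ (cell (g, h))), fun g h l => ?_⟩
  have key := apply_eq_apply_barHomotopy₂_barD₃ φ hc.cochainEval_barD₄
    (cochainEval_koszulToBar₃ halt) (cell (g, h, l))
  simp only [barD₃, extend_cell, map_add, map_sub, isEquivariant_barHomotopy₂.map_single, φ,
    cochainEval_translate] at key
  rwa [cell, cochainEval_single] at key

end Cochains

section TrilinearForms

open Finsupp FreeGMod

variable {T : Type*} [AddCommGroup T]

noncomputable def triCoeff (g h l : FreeAb) : ℕ × ℕ × ℕ →₀ ℤ :=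
  onFinset (g.support ×ˢ h.support ×ˢ l.support)
    (fun p => if p.1 < p.2.1 ∧ p.2.1 < p.2.2 then g p.1 * h p.2.1 * l p.2.2 else 0)
    (fun p hp => by
      simp only [ne_eq, ite_eq_right_iff, not_forall, mul_eq_zero, not_or] at hp
      simp [hp.2.1.1, hp.2.1.2, hp.2.2])

noncomputable def triForm (A : ℕ × ℕ × ℕ → T) (g h l : FreeAb) : T :=
  linearCombination ℤ A (triCoeff g h l)

@[simp] lemma triCoeff_apply (g h l : FreeAb) (p : ℕ × ℕ × ℕ) :
    triCoeff g h l p = if p.1 < p.2.1 ∧ p.2.1 < p.2.2 then g p.1 * h p.2.1 * l p.2.2 else 0 :=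
  onFinset_apply

lemma triForm_add_left (A : ℕ × ℕ × ℕ → T) (g g' h l : FreeAb) :
    triForm A (g + g') h l = triForm A g h l + triForm A g' h l := by
  rw [triForm, triForm, triForm, ← map_add]
  congr 1; ext p; simp only [triCoeff_apply, Finsupp.add_apply]; split_ifs <;> ring

lemma triForm_add_middle (A : ℕ × ℕ × ℕ → T) (g h h' l : FreeAb) :
    triForm A g (h + h') l = triForm A g h l + triForm A g h' l := by
  rw [triForm, triForm, triForm, ← map_add]
  congr 1; ext p; simp only [triCoeff_apply, Finsupp.add_apply]; split_ifs <;> ring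

lemma triForm_add_right (A : ℕ × ℕ × ℕ → T) (g h l l' : FreeAb) :
    triForm A g h (l + l') = triForm A g h l + triForm A g h l' := by
  rw [triForm, triForm, triForm, ← map_add]
  congr 1; ext p; simp only [triCoeff_apply, Finsupp.add_apply]; split_ifs <;> ring

lemma isCocycle₃_triForm (A : ℕ × ℕ × ℕ → T) : IsCocycle₃ (triForm A) := fun g₁ g₂ g₃ g₄ => by
  rw [triForm_add_left, triForm_add_middle, triForm_add_right]
  abel

lemma triForm_single (A : ℕ × ℕ × ℕ → T) (a b c : ℕ) :
    triForm A (single a 1) (single b 1) (single c 1) =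
      if a < b ∧ b < c then A (a, b, c) else 0 := by
  have : triCoeff (single a 1) (single b 1) (single c 1) =
      if a < b ∧ b < c then single (a, b, c) 1 else 0 := by
    ext ⟨i, j, k⟩
    simp only [triCoeff_apply, single_apply]
    split_ifs <;> simp_all [single_apply]
    omega
  rw [triForm, this]
  split_ifs <;> simp

lemma alternatization_triForm (A : ℕ × ℕ × ℕ → T) (τ : IncTriple) :
    alternatization (triForm A) τ.1 = A τ.1 := by
  obtain ⟨⟨i, j, k⟩, hij, hjk⟩ := τ
  simp [alternatization, altCells, cell, triForm_single, hij, hjk, hij.trans hjk, hij.le.not_gt,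
    hjk.le.not_gt, (hij.trans hjk).le.not_gt]

theorem IsCocycle₃.exists_eq_triForm_add_coboundary {c : FreeAb → FreeAb → FreeAb → T}
    (hc : IsCocycle₃ c) : ∃ β : FreeAb → FreeAb → T, ∀ g h l,
      c g h l = triForm (alternatization c) g h l
        + (β h l - β (g + h) l + β g (h + l) - β g h) := by
  set A := alternatization c
  have halt : ∀ τ : IncTriple, alternatization (fun g h l => c g h l - triForm A g h l) τ.1 = 0 :=
    fun τ => by rw [alternatization_sub, alternatization_triForm, sub_self]
  obtain ⟨β, hβ⟩ :=
    (hc.sub (isCocycle₃_triForm A)).exists_eq_coboundary_of_alternatization_eq_zero halt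
  exact ⟨β, fun g h l => by rw [← hβ]; abel⟩

end TrilinearForms

section Pullback

open Finsupp

variable {T : Type*} [AddCommGroup T]

lemma Hmul_snd (x y : UT × FreeAb) : (Hmul x y).2 = x.2 + y.2 := rfl

lemma entryM_Hmul (y z : UT × FreeAb) {j k : ℕ} (h : j < k) :
    entryM (Hmul y z) j k = entryM y j k + entryM z j k + y.2 j * z.2 k := by
  simp [entryM, h, Hmul, nM]

noncomputable def triPrimitiveCoeff (x y : UT × FreeAb) : ℕ × ℕ × ℕ →₀ ℤ :=
  onFinset (x.2.support ×ˢ (y.1.support.image fun q => q.1.1) ×ˢ (y.1.support.image fun q => q.1.2))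
    (fun p => if p.1 < p.2.1 ∧ p.2.1 < p.2.2 then x.2 p.1 * entryM y p.2.1 p.2.2 else 0)
    (fun p hp => by
      simp only [ne_eq, ite_eq_right_iff, not_forall, mul_eq_zero, not_or] at hp
      obtain ⟨⟨-, hjk⟩, hx, hy⟩ := hp
      rw [entryM, dif_pos hjk] at hy
      exact Finset.mem_product.2 ⟨mem_support_iff.2 hx, Finset.mem_product.2
        ⟨Finset.mem_image.2 ⟨_, mem_support_iff.2 hy, rfl⟩,
        Finset.mem_image.2 ⟨_, mem_support_iff.2 hy, rfl⟩⟩⟩)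

noncomputable def triPrimitive (A : ℕ × ℕ × ℕ → T) (x y : UT × FreeAb) : T :=
  linearCombination ℤ A (triPrimitiveCoeff x y)

@[simp] lemma triPrimitiveCoeff_apply (x y : UT × FreeAb) (p : ℕ × ℕ × ℕ) :
    triPrimitiveCoeff x y p =
      if p.1 < p.2.1 ∧ p.2.1 < p.2.2 then x.2 p.1 * entryM y p.2.1 p.2.2 else 0 :=
  onFinset_apply

lemma triForm_pullback (A : ℕ × ℕ × ℕ → T) (x y z : UT × FreeAb) :
    triForm A x.2 y.2 z.2 =
      triPrimitive A y z - triPrimitive A (Hmul x y) z + triPrimitive A x (Hmul y z)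
        - triPrimitive A x y := by
  have : triCoeff x.2 y.2 z.2 = triPrimitiveCoeff y z - triPrimitiveCoeff (Hmul x y) z
      + triPrimitiveCoeff x (Hmul y z) - triPrimitiveCoeff x y := by
    ext ⟨i, j, k⟩
    simp only [triCoeff_apply, triPrimitiveCoeff_apply, Finsupp.sub_apply, Finsupp.add_apply,
      Hmul_snd]
    split_ifs with h
    · rw [entryM_Hmul y z h.2]; ring
    · simp
  rw [triForm, this]
  simp only [triPrimitive, map_sub, map_add]

lemma finsum_zsmul_eq_linearCombination {α E : Type*} [AddCommGroup E] (w : α →₀ ℤ) (A : α → E) :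
    ∑ᶠ p, w p • A p = linearCombination ℤ A w := by
  have hsupp : Function.support (fun p => w p • A p) ⊆ w.support := fun p hp =>
    mem_support_iff.2 fun h => hp (by simp only [h, zero_smul])
  rw [finsum_eq_sum_of_support_subset _ hsupp, linearCombination_apply, Finsupp.sum]

lemma ca_eq_triForm (a : ℕ → ℕ → ℕ → ℝ) (g h l : FreeAb) :
    ca a g h l = ((triForm (fun p => a p.1 p.2.1 p.2.2) g h l : ℝ) : AddCircle (1 : ℝ)) := by
  rw [ca, triForm, ← finsum_zsmul_eq_linearCombination]
  congr 2; ext p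
  simp only [triCoeff_apply, zsmul_eq_mul]
  split_ifs <;> push_cast <;> ring

lemma ba_eq_triPrimitive (a : ℕ → ℕ → ℕ → ℝ) (x y : UT × FreeAb) :
    ba a x y = ((triPrimitive (fun p => a p.1 p.2.1 p.2.2) x y : ℝ) : AddCircle (1 : ℝ)) := by
  rw [ba, triPrimitive, ← finsum_zsmul_eq_linearCombination]
  congr 2; ext p
  simp only [triPrimitiveCoeff_apply, zsmul_eq_mul]
  split_ifs <;> push_cast <;> ring

end Pullback

/-- Every third cocycle of `G = ℤ^{<ℕ}` becomes a coboundary after pullback along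
`π₀ : H → G`, i.e. `π₀^*(Z³(G,T)) ⊆ B³(H,T)`; in particular `π₀^*(c_a) = ∂_H b_a`. -/
theorem stmt_15 :
    (∀ c : FreeAb → FreeAb → FreeAb → AddCircle (1 : ℝ),
      (∀ g₁ g₂ g₃ g₄ : FreeAb,
          c g₂ g₃ g₄ - c (g₁ + g₂) g₃ g₄ + c g₁ (g₂ + g₃) g₄
            - c g₁ g₂ (g₃ + g₄) + c g₁ g₂ g₃ = 0) →
      ∃ b : (UT × FreeAb) → (UT × FreeAb) → AddCircle (1 : ℝ),
        ∀ x y z : UT × FreeAb,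
          c x.2 y.2 z.2 = b y z - b (Hmul x y) z + b x (Hmul y z) - b x y) ∧
    (∀ (a : ℕ → ℕ → ℕ → ℝ) (x y z : UT × FreeAb),
        ca a x.2 y.2 z.2 =
          ba a y z - ba a (Hmul x y) z + ba a x (Hmul y z) - ba a x y) := by
  refine ⟨fun c hc => ?_, fun a x y z => ?_⟩
  · obtain ⟨β, hβ⟩ := IsCocycle₃.exists_eq_triForm_add_coboundary hc
    refine ⟨fun x y => triPrimitive (alternatization c) x y + β x.2 y.2, fun x y z => ?_⟩
    simp only [hβ, triForm_pullback, Hmul_snd]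
    abel
  · simp only [ca_eq_triForm, ba_eq_triPrimitive, triForm_pullback, AddCircle.coe_sub,
      AddCircle.coe_add]
end

section
/- Let p_i,p_j,q_i,q_j be positive integers, D(i,j)=gcd(p_i,p_j,q_i,q_j), D_{ij}=gcd(p_i,p_j), E_{ij}=gcd(q_i,q_j), r_{ij}=p_i/D_{ij}, r_{ji}=p_j/D_{ij}, s_{ij}=q_i/E_{ij}, s_{ji}=q_j/E_{ij}, m_{ij}=D_{ij}/D(i,j), n_{ij}=E_{ij}/D(i,j), and choose integers w_{ij},w_{ji},x_{ij},y_{ij} with q_i w_{ij} + q_j w_{ji} = E_{ij} and x_{ij}D_{ij} + y_{ij}E_{ij} = D(i,j). Define Z = {(x,u,y,v) ∈ ℝ⁴: p_j x − q_j u ∈ ℤ and p_i y − q_i v ∈ ℤ} and B = {(x,u,y,v) ∈ Z : p_j x + p_i y ∈ D_{ij}ℤ, u ∈ ℤ, v ∈ ℤ}. Then Z/B ≅ ((1/D(i,j))ℤ)/ℤ ⊕ ℝ/ℤ ⊕ ℝ/ℤ, where the class of (x,u,y,v) maps to ([m_{ij}(x r_{ji}+y r_{ij}) − n_{ij}(u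 s_{ji}+v s_{ij})]_ℤ, [y_{ij}(x r_{ji}+y r_{ij}) + x_{ij}(u s_{ji}+v s_{ij})]_ℤ, [−u w_{ij} + v w_{ji}]_ℤ). -/
/-!
Write `A = x r_{ji} + y r_{ij}`, `B = u s_{ji} + v s_{ij}` and `C = −w_{ij} u + w_{ji} v`. On `Z`,
`(p_j x − q_j u) + (p_i y − q_i v) = D(i,j) (m_{ij} A − n_{ij} B)` and `p_j x + p_i y = D_{ij} A`.
Dividing the two Bézout identities by their gcds gives `m_{ij} x_{ij} + n_{ij} y_{ij} = 1` and
`s_{ij} w_{ij} + s_{ji} w_{ji} = 1`, so `(A, B) ↦ (m_{ij} A − n_{ij} B, y_{ij} A + x_{ij} B)` and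
`(u, v) ↦ (B, C)` are unimodular changes of coordinates. Hence the map of the statement vanishes
at a point of `Z` exactly when `A`, `u`, `v` are integers, which is membership in the subgroup `B`,
and inverting the two coordinate changes shows that it is onto.
-/

/-- `Z = {(x,u,y,v) ∈ ℝ⁴ : p_j x − q_j u ∈ ℤ and p_i y − q_i v ∈ ℤ}` as an additive
subgroup of `ℝ⁴`. -/
def Zb (pi pj qi qj : ℤ) : AddSubgroup (ℝ × ℝ × ℝ × ℝ) where
  carrier := {z | (∃ k : ℤ, (pj : ℝ) * z.1 - (qj : ℝ) * z.2.1 = (k : ℝ)) ∧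
    (∃ l : ℤ, (pi : ℝ) * z.2.2.1 - (qi : ℝ) * z.2.2.2 = (l : ℝ))}
  zero_mem' := ⟨⟨0, by simp⟩, ⟨0, by simp⟩⟩
  add_mem' := by
    rintro a b ⟨⟨k, hk⟩, ⟨l, hl⟩⟩ ⟨⟨k', hk'⟩, ⟨l', hl'⟩⟩
    constructor
    · refine ⟨k + k', ?_⟩
      push_cast
      simp only [Prod.fst_add, Prod.snd_add]
      ring_nf; ring_nf at hk hk'; linarith
    · refine ⟨l + l', ?_⟩
      push_cast
      simp only [Prod.fst_add, Prod.snd_add]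
      ring_nf; ring_nf at hl hl'; linarith
  neg_mem' := by
    rintro a ⟨⟨k, hk⟩, ⟨l, hl⟩⟩
    constructor
    · refine ⟨-k, ?_⟩
      push_cast
      simp only [Prod.fst_neg, Prod.snd_neg]
      linarith
    · refine ⟨-l, ?_⟩
      push_cast
      simp only [Prod.fst_neg, Prod.snd_neg]
      linarith

/-- `B = {(x,u,y,v) ∈ Z : p_j x + p_i y ∈ D_{ij}ℤ, u ∈ ℤ, v ∈ ℤ}` as an additive
subgroup of `ℝ⁴`. -/
def Bb (pi pj qi qj Dij : ℤ) : AddSubgroup (ℝ × ℝ × ℝ × ℝ) where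
  carrier := {z | (∃ k : ℤ, (pj : ℝ) * z.1 - (qj : ℝ) * z.2.1 = (k : ℝ)) ∧
    (∃ l : ℤ, (pi : ℝ) * z.2.2.1 - (qi : ℝ) * z.2.2.2 = (l : ℝ)) ∧
    (∃ d : ℤ, (pj : ℝ) * z.1 + (pi : ℝ) * z.2.2.1 = (Dij : ℝ) * (d : ℝ)) ∧
    (∃ u : ℤ, z.2.1 = (u : ℝ)) ∧ (∃ v : ℤ, z.2.2.2 = (v : ℝ))}
  zero_mem' := ⟨⟨0, by simp⟩, ⟨0, by simp⟩, ⟨0, by simp⟩, ⟨0, by simp⟩, ⟨0, by simp⟩⟩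
  add_mem' := by
    rintro a b ⟨⟨k, hk⟩, ⟨l, hl⟩, ⟨d, hd⟩, ⟨u, hu⟩, ⟨v, hv⟩⟩
      ⟨⟨k', hk'⟩, ⟨l', hl'⟩, ⟨d', hd'⟩, ⟨u', hu'⟩, ⟨v', hv'⟩⟩
    refine ⟨⟨k + k', ?_⟩, ⟨l + l', ?_⟩, ⟨d + d', ?_⟩, ⟨u + u', ?_⟩, ⟨v + v', ?_⟩⟩ <;>
      (push_cast
       simp only [Prod.fst_add, Prod.snd_add]
       ring_nf
       try ring_nf at hk
       try ring_nf at hk'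
       try ring_nf at hl
       try ring_nf at hl'
       try ring_nf at hd
       try ring_nf at hd'
       try ring_nf at hu
       try ring_nf at hu'
       try ring_nf at hv
       try ring_nf at hv'
       linarith)
  neg_mem' := by
    rintro a ⟨⟨k, hk⟩, ⟨l, hl⟩, ⟨d, hd⟩, ⟨u, hu⟩, ⟨v, hv⟩⟩
    refine ⟨⟨-k, ?_⟩, ⟨-l, ?_⟩, ⟨-d, ?_⟩, ⟨-u, ?_⟩, ⟨-v, ?_⟩⟩ <;>
      (push_cast
       simp only [Prod.fst_neg, Prod.snd_neg]
       ring_nf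
       try ring_nf at hk
       try ring_nf at hl
       try ring_nf at hd
       try ring_nf at hu
       try ring_nf at hv
       linarith)

theorem exists_int_pair_iff_of_det_eq_one {a b c d : ℤ} (h : a * d - b * c = 1)
    {s t P Q : ℝ} (hP : P = a * s + b * t) (hQ : Q = c * s + d * t) :
    ((∃ m : ℤ, P = m) ∧ ∃ n : ℤ, Q = n) ↔ (∃ m : ℤ, s = m) ∧ ∃ n : ℤ, t = n := by
  have hR : (a : ℝ) * d - b * c = 1 := by exact_mod_cast h
  subst hP hQ
  constructor
  · rintro ⟨⟨m, hm⟩, n, hn⟩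
    exact ⟨⟨d * m - b * n, by push_cast; linear_combination (d : ℝ) * hm - b * hn - s * hR⟩,
      ⟨a * n - c * m, by push_cast; linear_combination (a : ℝ) * hn - c * hm - t * hR⟩⟩
  · rintro ⟨⟨m, rfl⟩, n, rfl⟩
    exact ⟨⟨a * m + b * n, by push_cast; ring⟩, ⟨c * m + d * n, by push_cast; ring⟩⟩

theorem exists_int_mul_eq_mul_iff {r s : ℝ} (hr : r ≠ 0) :
    (∃ n : ℤ, r * s = r * n) ↔ ∃ n : ℤ, s = n :=
  exists_congr fun _ => mul_right_inj' hr

theorem AddCircle.coe_eq_zero_iff_exists_int (s : ℝ) :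
    (s : AddCircle (1 : ℝ)) = 0 ↔ ∃ n : ℤ, s = n := by
  rw [AddCircle.coe_eq_zero_iff]
  exact exists_congr fun n => by rw [zsmul_one, eq_comm]

theorem ZMod.intCast_eq_zero_iff_exists_int {D : ℕ} (hD : D ≠ 0) {n : ℤ} {s : ℝ}
    (hs : (n : ℝ) = D * s) : (n : ZMod D) = 0 ↔ ∃ c : ℤ, s = c := by
  rw [ZMod.intCast_zmod_eq_zero_iff_dvd, ← exists_int_mul_eq_mul_iff (Nat.cast_ne_zero.2 hD), ← hs]
  constructor
  · rintro ⟨c, rfl⟩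
    exact ⟨c, by push_cast; ring⟩
  · rintro ⟨c, hc⟩
    exact ⟨c, by exact_mod_cast hc⟩

theorem mul_add_mul_eq_one_of_eq_mul {a b g x y m n : ℤ} (h : a * x + b * y = g)
    (ha : a = g * m) (hb : b = g * n) (hg : g ≠ 0) : m * x + n * y = 1 :=
  mul_left_cancel₀ hg (by linear_combination h - x * ha - y * hb)

namespace Zb

variable {pi pj qi qj : ℤ}

noncomputable def level (z : Zb pi pj qi qj) : ℤ :=
  ⌊(pj : ℝ) * z.1.1 - qj * z.1.2.1 + (pi * z.1.2.2.1 - qi * z.1.2.2.2)⌋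

theorem level_mk {x u y v : ℝ} (hz : (x, u, y, v) ∈ Zb pi pj qi qj) {n : ℤ}
    (h : (pj : ℝ) * x - qj * u + (pi * y - qi * v) = n) : level ⟨(x, u, y, v), hz⟩ = n :=
  (congrArg Int.floor h).trans (Int.floor_intCast n)

theorem cast_level (z : Zb pi pj qi qj) :
    (level z : ℝ) = pj * z.1.1 - qj * z.1.2.1 + (pi * z.1.2.2.1 - qi * z.1.2.2.2) := by
  obtain ⟨⟨k, hk⟩, l, hl⟩ := z.2
  have h : (pj : ℝ) * z.1.1 - qj * z.1.2.1 + (pi * z.1.2.2.1 - qi * z.1.2.2.2) = (k + l : ℤ) := by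
    push_cast; rw [hk, hl]
  rw [level, h, Int.floor_intCast]

theorem level_add (a b : Zb pi pj qi qj) : level (a + b) = level a + level b :=
  Int.cast_injective (α := ℝ) <| by
    push_cast [cast_level]
    simp only [Prod.fst_add, Prod.snd_add]
    ring

variable (pi pj qi qj) (rij rji sij sji wij wji xij yij : ℤ) (D : ℕ)

/-- The first factor `((1/D(i,j))ℤ)/ℤ` of the paper is identified with `ZMod D(i,j)` through
multiplication by `D(i,j)`; on `Z` this turns `[m_{ij} A − n_{ij} B]` into the integer
`level = (p_j x − q_j u) + (p_i y − q_i v) = D(i,j) (m_{ij} A − n_{ij} B)`. -/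
noncomputable def coords :
    Zb pi pj qi qj →+ ZMod D × AddCircle (1 : ℝ) × AddCircle (1 : ℝ) :=
  AddMonoidHom.mk' (fun z => ((level z : ZMod D),
      (((yij : ℝ) * (z.1.1 * rji + z.1.2.2.1 * rij) + xij * (z.1.2.1 * sji + z.1.2.2.2 * sij) : ℝ) :
        AddCircle (1 : ℝ)),
      ((-(wij : ℝ) * z.1.2.1 + wji * z.1.2.2.2 : ℝ) : AddCircle (1 : ℝ)))) fun a b => by
    simp only [level_add, Int.cast_add, AddSubgroup.coe_add, Prod.fst_add, Prod.snd_add,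
      ← AddCircle.coe_add, Prod.mk_add_mk]
    congr 3 <;> ring

variable {pi pj qi qj rij rji sij sji wij wji xij yij D}

theorem coords_mk {x u y v : ℝ} (hz : (x, u, y, v) ∈ Zb pi pj qi qj) {k l : ℤ}
    (hk : (pj : ℝ) * x - qj * u = k) (hl : (pi : ℝ) * y - qi * v = l) :
    coords pi pj qi qj rij rji sij sji wij wji xij yij D ⟨(x, u, y, v), hz⟩ =
      (((k + l : ℤ) : ZMod D),
        (((yij : ℝ) * (x * rji + y * rij) + xij * (u * sji + v * sij) : ℝ) : AddCircle (1 : ℝ)),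
        ((-(wij : ℝ) * u + wji * v : ℝ) : AddCircle (1 : ℝ))) := by
  show ((level ⟨(x, u, y, v), hz⟩ : ZMod D), _, _) = _
  rw [level_mk hz (n := k + l) (by push_cast; rw [hk, hl])]

theorem ker_coords {Dij Eij mij nij : ℤ} (hrij : pi = Dij * rij) (hrji : pj = Dij * rji)
    (hsij : qi = Eij * sij) (hsji : qj = Eij * sji) (hmij : Dij = D * mij) (hnij : Eij = D * nij)
    (hxy : mij * xij + nij * yij = 1) (hsw : sij * wij + sji * wji = 1) (hDij : Dij ≠ 0)
    (hD : D ≠ 0) :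
    (coords pi pj qi qj rij rji sij sji wij wji xij yij D).ker =
      (Bb pi pj qi qj Dij).addSubgroupOf (Zb pi pj qi qj) := by
  ext ⟨⟨x, u, y, v⟩, hz⟩
  obtain ⟨⟨k, hk⟩, l, hl⟩ := id hz
  set A := x * rji + y * rij
  set B := u * sji + v * sij
  have hlevel : ((k + l : ℤ) : ℝ) = D * (mij * A - nij * B) := by
    subst hrij hrji hsij hsji hmij hnij
    push_cast at hk hl ⊢
    linear_combination -hk - hl
  have hAB : ((∃ c : ℤ, mij * A - nij * B = c) ∧ ∃ c : ℤ, yij * A + xij * B = c) ↔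
      (∃ c : ℤ, A = c) ∧ ∃ c : ℤ, B = c :=
    exists_int_pair_iff_of_det_eq_one (a := mij) (b := -nij) (c := yij) (d := xij)
      (by linear_combination hxy) (by push_cast; ring) rfl
  have huv : ((∃ c : ℤ, B = c) ∧ ∃ c : ℤ, -wij * u + wji * v = c) ↔
      (∃ c : ℤ, u = c) ∧ ∃ c : ℤ, v = c :=
    exists_int_pair_iff_of_det_eq_one (a := sji) (b := sij) (c := -wij) (d := wji)
      (by linear_combination hsw) (by ring) (by push_cast; ring)
  have hBb : (x, u, y, v) ∈ Bb pi pj qi qj Dij ↔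
      (∃ c : ℤ, A = c) ∧ (∃ c : ℤ, u = c) ∧ ∃ c : ℤ, v = c := by
    have hA : (pj : ℝ) * x + pi * y = Dij * A := by
      subst hrij hrji
      push_cast
      ring
    show (_ ∧ _ ∧ (∃ d : ℤ, (pj : ℝ) * x + pi * y = Dij * d) ∧ _) ↔ _
    rw [and_iff_right ⟨k, hk⟩, and_iff_right ⟨l, hl⟩, hA,
      exists_int_mul_eq_mul_iff (Int.cast_ne_zero.2 hDij)]
  rw [AddMonoidHom.mem_ker, coords_mk hz hk hl, Prod.mk_eq_zero, Prod.mk_eq_zero,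
    ZMod.intCast_eq_zero_iff_exists_int hD hlevel, AddCircle.coe_eq_zero_iff_exists_int,
    AddCircle.coe_eq_zero_iff_exists_int, ← and_assoc, hAB, and_assoc, huv,
    AddSubgroup.mem_addSubgroupOf]
  exact hBb.symm

theorem coords_surjective {Dij Eij mij nij : ℤ} (hrij : pi = Dij * rij)
    (hrji : pj = Dij * rji) (hsij : qi = Eij * sij) (hsji : qj = Eij * sji)
    (hmij : Dij = D * mij) (hnij : Eij = D * nij) (hxy : mij * xij + nij * yij = 1)
    (hsw : sij * wij + sji * wji = 1) (hpi : pi ≠ 0) (hpj : pj ≠ 0) (hD : D ≠ 0) :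
    Function.Surjective (coords pi pj qi qj rij rji sij sji wij wji xij yij D) := by
  rintro ⟨a, b, c⟩
  obtain ⟨t, rfl⟩ := ZMod.intCast_surjective a
  obtain ⟨β, rfl⟩ := QuotientAddGroup.mk_surjective b
  obtain ⟨γ, rfl⟩ := QuotientAddGroup.mk_surjective c
  have hxyR : (mij : ℝ) * xij + nij * yij = 1 := by exact_mod_cast hxy
  have hswR : (sij : ℝ) * wij + sji * wji = 1 := by exact_mod_cast hsw
  -- invert the two unimodular coordinate changes, then choose `x, y` with `k = t` and `l = 0`
  set A : ℝ := xij * (t / D) + nij * β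
  set B : ℝ := mij * β - yij * (t / D)
  set u : ℝ := wji * B - sij * γ
  set v : ℝ := wij * B + sji * γ
  set x : ℝ := (qj * u + t) / pj
  set y : ℝ := qi * v / pi
  have hk : (pj : ℝ) * x - qj * u = t := by
    simp only [x]
    field_simp
    ring
  have hl : (pi : ℝ) * y - qi * v = (0 : ℤ) := by
    simp only [y]
    field_simp
    push_cast
    ring
  have hz : (x, u, y, v) ∈ Zb pi pj qi qj := ⟨⟨t, hk⟩, 0, hl⟩
  have hB : u * sji + v * sij = B := by linear_combination B * hswR
  have hA : x * rji + y * rij = A := by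
    have hPi : (pi : ℝ) = Dij * rij := by exact_mod_cast hrij
    have hPj : (pj : ℝ) = Dij * rji := by exact_mod_cast hrji
    have hQi : (qi : ℝ) = Eij * sij := by exact_mod_cast hsij
    have hQj : (qj : ℝ) = Eij * sji := by exact_mod_cast hsji
    have hDA : (Dij : ℝ) * A - Eij * B = t := by
      have hM : (Dij : ℝ) = D * mij := by exact_mod_cast hmij
      have hN : (Eij : ℝ) = D * nij := by exact_mod_cast hnij
      have hDR : (D : ℝ) ≠ 0 := Nat.cast_ne_zero.2 hD
      simp only [A, B, hM, hN]
      field_simp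
      linear_combination (t : ℝ) * hxyR
    refine mul_left_cancel₀ (Int.cast_ne_zero.2 (left_ne_zero_of_mul (hrij ▸ hpi))) ?_
    push_cast at hl
    linear_combination -x * hPj - y * hPi + hk + hl + u * hQj + v * hQi + Eij * hB - hDA
  refine ⟨⟨(x, u, y, v), hz⟩, ?_⟩
  rw [coords_mk hz hk hl, add_zero, hA, hB]
  congr 3
  · linear_combination β * hxyR
  · linear_combination γ * hswR

end Zb

open QuotientAddGroup

theorem stmt_18_general (pi pj qi qj rij rji sij sji wij wji xij yij mij nij : ℤ)
    (Dij Eij Dbig : ℕ)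
    (hpi : 0 < pi) (hpj : 0 < pj) (hqi : 0 < qi)
    (hrij : pi = (Dij : ℤ) * rij) (hrji : pj = (Dij : ℤ) * rji)
    (hsij : qi = (Eij : ℤ) * sij) (hsji : qj = (Eij : ℤ) * sji)
    (hmij : (Dij : ℤ) = (Dbig : ℤ) * mij) (hnij : (Eij : ℤ) = (Dbig : ℤ) * nij)
    (hw : qi * wij + qj * wji = (Eij : ℤ))
    (hxy : xij * (Dij : ℤ) + yij * (Eij : ℤ) = (Dbig : ℤ)) :
    ∃ e : (↥(Zb pi pj qi qj) ⧸ ((Bb pi pj qi qj (Dij : ℤ)).addSubgroupOf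
        (Zb pi pj qi qj))) ≃+ ZMod Dbig × AddCircle (1 : ℝ) × AddCircle (1 : ℝ),
      ∀ (x u y v : ℝ) (hz : (x, u, y, v) ∈ Zb pi pj qi qj) (k l : ℤ),
        (pj : ℝ) * x - (qj : ℝ) * u = (k : ℝ) →
        (pi : ℝ) * y - (qi : ℝ) * v = (l : ℝ) →
        e (QuotientAddGroup.mk ⟨(x, u, y, v), hz⟩) =
          (((k + l : ℤ) : ZMod Dbig),
           (((yij : ℝ) * (x * (rji : ℝ) + y * (rij : ℝ))
              + (xij : ℝ) * (u * (sji : ℝ) + v * (sij : ℝ)) : ℝ) : AddCircle (1 : ℝ)),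
           ((-(wij : ℝ) * u + (wji : ℝ) * v : ℝ) : AddCircle (1 : ℝ))) := by
  have hDij : (Dij : ℤ) ≠ 0 := left_ne_zero_of_mul (hrij ▸ hpi.ne')
  have hEij : (Eij : ℤ) ≠ 0 := left_ne_zero_of_mul (hsij ▸ hqi.ne')
  have hDbig : Dbig ≠ 0 := by exact_mod_cast left_ne_zero_of_mul (hmij ▸ hDij)
  have hmn : mij * xij + nij * yij = 1 :=
    mul_add_mul_eq_one_of_eq_mul (x := xij) (y := yij) (by linear_combination hxy) hmij hnij
      (by exact_mod_cast hDbig)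
  have hsw : sij * wij + sji * wji = 1 := mul_add_mul_eq_one_of_eq_mul hw hsij hsji hEij
  refine ⟨(quotientAddEquivOfEq
      (Zb.ker_coords hrij hrji hsij hsji hmij hnij hmn hsw hDij hDbig).symm).trans
    (quotientKerEquivOfSurjective _
      (Zb.coords_surjective hrij hrji hsij hsji hmij hnij hmn hsw hpi.ne' hpj.ne' hDbig)), ?_⟩
  intro x u y v hz k l hk hl
  exact Zb.coords_mk hz hk hl

/-- With `D(i,j) = gcd(p_i,p_j,q_i,q_j)`, `D_{ij} = gcd(p_i,p_j)`, `E_{ij} = gcd(q_i,q_j)`,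
`p_i = D_{ij} r_{ij}`, `p_j = D_{ij} r_{ji}`, `q_i = E_{ij} s_{ij}`, `q_j = E_{ij} s_{ji}`,
`D_{ij} = D(i,j)·m_{ij}`, `E_{ij} = D(i,j)·n_{ij}`, `q_i w_{ij} + q_j w_{ji} = E_{ij}`,
`x_{ij}D_{ij} + y_{ij}E_{ij} = D(i,j)`: the quotient `Z/B` is isomorphic to
`((1/D(i,j))ℤ)/ℤ ⊕ ℝ/ℤ ⊕ ℝ/ℤ ≅ ℤ/D(i,j)ℤ ⊕ ℝ/ℤ ⊕ ℝ/ℤ`, the class of `(x,u,y,v)` (with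
`p_j x − q_j u = k`, `p_i y − q_i v = l`) mapping to
`([m_{ij}(x r_{ji}+y r_{ij}) − n_{ij}(u s_{ji}+v s_{ij})] = k + l mod D(i,j)`,
`[y_{ij}(x r_{ji}+y r_{ij}) + x_{ij}(u s_{ji}+v s_{ij})]`, `[−u w_{ij} + v w_{ji}]`). -/
theorem stmt_18 (pi pj qi qj rij rji sij sji wij wji xij yij mij nij : ℤ)
    (Dij Eij Dbig : ℕ)
    (hpi : 0 < pi) (hpj : 0 < pj) (hqi : 0 < qi) (hqj : 0 < qj)
    (hDij : (Dij : ℤ) = Int.gcd pi pj) (hEij : (Eij : ℤ) = Int.gcd qi qj)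
    (hDbig : (Dbig : ℤ) = Int.gcd (Int.gcd pi pj : ℤ) (Int.gcd qi qj : ℤ))
    (hrij : pi = (Dij : ℤ) * rij) (hrji : pj = (Dij : ℤ) * rji)
    (hsij : qi = (Eij : ℤ) * sij) (hsji : qj = (Eij : ℤ) * sji)
    (hmij : (Dij : ℤ) = (Dbig : ℤ) * mij) (hnij : (Eij : ℤ) = (Dbig : ℤ) * nij)
    (hw : qi * wij + qj * wji = (Eij : ℤ))
    (hxy : xij * (Dij : ℤ) + yij * (Eij : ℤ) = (Dbig : ℤ)) :
    ∃ e : (↥(Zb pi pj qi qj) ⧸ ((Bb pi pj qi qj (Dij : ℤ)).addSubgroupOf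
        (Zb pi pj qi qj))) ≃+ ZMod Dbig × AddCircle (1 : ℝ) × AddCircle (1 : ℝ),
      ∀ (x u y v : ℝ) (hz : (x, u, y, v) ∈ Zb pi pj qi qj) (k l : ℤ),
        (pj : ℝ) * x - (qj : ℝ) * u = (k : ℝ) →
        (pi : ℝ) * y - (qi : ℝ) * v = (l : ℝ) →
        e (QuotientAddGroup.mk ⟨(x, u, y, v), hz⟩) =
          (((k + l : ℤ) : ZMod Dbig),
           (((yij : ℝ) * (x * (rji : ℝ) + y * (rij : ℝ))
              + (xij : ℝ) * (u * (sji : ℝ) + v * (sij : ℝ)) : ℝ) : AddCircle (1 : ℝ)),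
           ((-(wij : ℝ) * u + (wji : ℝ) * v : ℝ) : AddCircle (1 : ℝ))) :=
  stmt_18_general pi pj qi qj rij rji sij sji wij wji xij yij mij nij Dij Eij Dbig hpi hpj hqi hrij
    hrji hsij hsji hmij hnij hw hxy
end
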